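/- arXiv:2311.06875 — 9 statements merged into one kernel-verified Lean document; each statement's English description precedes it below -/
import Mathlib

section
/- Let G be a graph with at least one edge. The following are equivalent: (i) q*(G) = 0; (ii) q_A(G) ≤ 0 for every bipartition A = {U, V∖U} of V(G); (iii) p_G(U) ≤ 0 for every proper nonempty subset U of V(G), where p_G(U) = 2e(U)·vol(G) − vol(U)². -/
open Finset
open scoped Classical

noncomputable def vol {V : Type*} [Fintype V] (G : SimpleGraph V) (U : Finset V) : ℕ :=
  ∑ v ∈ U, G.degree v

noncomputable def numEdges {V : Type*} [Fintype V] (G : SimpleGraph V) : ℕ :=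
  G.edgeFinset.card

noncomputable def edgesIn {V : Type*} [Fintype V] (G : SimpleGraph V) (U : Finset V) : ℕ :=
  (G.edgeFinset.filter (fun e => ∀ v ∈ e, v ∈ U)).card

noncomputable def edgesBetween {V : Type*} [Fintype V] (G : SimpleGraph V) (A B : Finset V) : ℕ :=
  (G.edgeFinset.filter (fun e => ∃ a ∈ A, ∃ b ∈ B, e = s(a, b))).card

/-- modularity score of the bipartition `{A, Aᶜ}`. -/
noncomputable def bipScore {V : Type*} [Fintype V] (G : SimpleGraph V) (A : Finset V) : ℝ :=
  ((edgesIn G A : ℝ) + (edgesIn G Aᶜ : ℝ)) / (numEdges G : ℝ)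
    - ((vol G A : ℝ) ^ 2 + (vol G Aᶜ : ℝ) ^ 2) / (4 * (numEdges G : ℝ) ^ 2)

/-- modularity score of a vertex partition. -/
noncomputable def modScore {V : Type*} [Fintype V] (G : SimpleGraph V)
    (P : Finpartition (univ : Finset V)) : ℝ :=
  (∑ A ∈ P.parts, (edgesIn G A : ℝ)) / (numEdges G : ℝ)
    - (∑ A ∈ P.parts, (vol G A : ℝ) ^ 2) / (4 * (numEdges G : ℝ) ^ 2)

/-- the modularity `q*(G)`: the maximum modularity score over all vertex partitions. -/
noncomputable def modularity {V : Type*} [Fintype V] (G : SimpleGraph V) : ℝ :=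
  ⨆ P : Finpartition (univ : Finset V), modScore G P

section Aux
variable {V : Type*} [Fintype V] (G : SimpleGraph V)

lemma edgesIn_univ : edgesIn G univ = numEdges G := by
  unfold edgesIn numEdges
  rw [Finset.filter_true_of_mem]
  intro e _
  simp

lemma vol_univ : vol G univ = 2 * numEdges G := by
  unfold vol numEdges
  exact G.sum_degrees_eq_twice_card_edges

lemma vol_add_compl (U : Finset V) : vol G U + vol G Uᶜ = 2 * numEdges G := by
  rw [← vol_univ]
  unfold vol
  rw [← Finset.sum_add_sum_compl U]

lemma vol_eq_sum (U : Finset V) :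
    vol G U = ∑ e ∈ G.edgeFinset, (U.filter (· ∈ e)).card := by
  unfold vol
  have h : ∀ v : V, G.degree v = (G.edgeFinset.filter (fun e => v ∈ e)).card := by
    intro v
    rw [← G.card_incidenceFinset_eq_degree, G.incidenceFinset_eq_filter]
  simp_rw [h, Finset.card_filter]
  rw [Finset.sum_comm]

lemma key (U : Finset V) :
    vol G U + edgesIn G Uᶜ = numEdges G + edgesIn G U := by
  rw [vol_eq_sum]
  unfold edgesIn numEdges
  rw [Finset.card_filter, Finset.card_filter, ← Finset.sum_add_distrib,
    Finset.card_eq_sum_ones G.edgeFinset, ← Finset.sum_add_distrib]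
  apply Finset.sum_congr rfl
  intro e he
  rw [SimpleGraph.mem_edgeFinset] at he
  induction e with
  | _ a b =>
    have hab : a ≠ b := G.ne_of_adj ((SimpleGraph.mem_edgeSet G).mp he)
    have hfe : (U.filter (· ∈ s(a,b))) = U ∩ {a, b} := by
      ext v; simp [Sym2.mem_iff, and_comm]
    have hcard : (U ∩ {a, b}).card =
        (if a ∈ U then 1 else 0) + (if b ∈ U then 1 else 0) := by
      by_cases ha : a ∈ U <;> by_cases hb : b ∈ U <;>
        · rw [Finset.inter_comm]
          simp [Finset.insert_inter_of_mem, Finset.insert_inter_of_notMem,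
            Finset.singleton_inter_of_mem, Finset.singleton_inter_of_notMem,
            ha, hb, hab]
    rw [hfe, hcard]
    simp only [Sym2.forall_mem_pair, Finset.mem_compl]
    by_cases ha : a ∈ U <;> by_cases hb : b ∈ U <;> simp [ha, hb]

lemma pZ_compl (U : Finset V) :
    2 * (edgesIn G Uᶜ : ℤ) * (2 * numEdges G) - (vol G Uᶜ : ℤ) ^ 2
      = 2 * (edgesIn G U : ℤ) * (2 * numEdges G) - (vol G U : ℤ) ^ 2 := by
  have k := key G U
  have v := vol_add_compl G U
  have hy : (vol G Uᶜ : ℤ) = 2 * numEdges G - vol G U := by omega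
  have he : (edgesIn G Uᶜ : ℤ) = (numEdges G : ℤ) + edgesIn G U - vol G U := by omega
  rw [hy, he]; ring

lemma bipScore_eq (hm : 1 ≤ numEdges G) (U : Finset V) :
    bipScore G U
      = ((2 * (edgesIn G U : ℤ) * (2 * numEdges G) - (vol G U : ℤ) ^ 2 : ℤ) : ℝ)
          / (2 * (numEdges G : ℝ) ^ 2) := by
  have hm0 : (0:ℝ) < (numEdges G : ℝ) := by exact_mod_cast hm
  have hpc := pZ_compl G U
  have : bipScore G U
      = (((2 * (edgesIn G U : ℤ) * (2 * numEdges G) - (vol G U : ℤ) ^ 2 : ℤ) : ℝ)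
          + ((2 * (edgesIn G Uᶜ : ℤ) * (2 * numEdges G) - (vol G Uᶜ : ℤ) ^ 2 : ℤ) : ℝ))
          / (4 * (numEdges G : ℝ) ^ 2) := by
    unfold bipScore
    push_cast
    field_simp
    ring
  rw [this, hpc]
  push_cast
  ring

lemma modScore_eq (hm : 1 ≤ numEdges G) (P : Finpartition (univ : Finset V)) :
    modScore G P
      = (∑ A ∈ P.parts,
          ((2 * (edgesIn G A : ℤ) * (2 * numEdges G) - (vol G A : ℤ) ^ 2 : ℤ) : ℝ))
          / (4 * (numEdges G : ℝ) ^ 2) := by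
  have hm0 : (0:ℝ) < (numEdges G : ℝ) := by exact_mod_cast hm
  have hs : (∑ A ∈ P.parts,
      ((2 * (edgesIn G A : ℤ) * (2 * numEdges G) - (vol G A : ℤ) ^ 2 : ℤ) : ℝ))
      = 4 * (numEdges G : ℝ) * (∑ A ∈ P.parts, (edgesIn G A : ℝ))
        - ∑ A ∈ P.parts, (vol G A : ℝ) ^ 2 := by
    push_cast
    rw [Finset.sum_sub_distrib]
    congr 1
    rw [Finset.mul_sum]
    exact Finset.sum_congr rfl fun A _ => by ring
  unfold modScore
  rw [hs]
  field_simp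

noncomputable def pairP (U : Finset V) (h1 : U.Nonempty) (h2 : U ≠ univ) :
    Finpartition (univ : Finset V) where
  parts := {U, Uᶜ}
  supIndep := by
    have hne : U ≠ Uᶜ := by
      intro h
      obtain ⟨a, ha⟩ := h1
      exact (Finset.mem_compl.mp (h ▸ ha)) ha
    exact (Finset.supIndep_pair hne).mpr disjoint_compl_right
  sup_parts := by
    simp [Finset.sup_insert, Finset.sup_singleton, Finset.union_compl]
  bot_notMem := by
    have h2' : Uᶜ.Nonempty := by
      rw [← Finset.card_pos]
      have := Finset.card_lt_card (lt_of_le_of_ne (Finset.subset_univ U) h2)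
      rw [Finset.card_compl]
      rw [Finset.card_univ] at this
      omega
    simp only [Finset.bot_eq_empty, Finset.mem_insert, Finset.mem_singleton]
    push_neg
    exact ⟨fun h => h1.ne_empty h.symm, fun h => h2'.ne_empty h.symm⟩

lemma pairP_parts (U : Finset V) (h1 : U.Nonempty) (h2 : U ≠ univ) :
    (pairP U h1 h2).parts = {U, Uᶜ} := rfl

lemma modScore_pairP (U : Finset V) (h1 : U.Nonempty) (h2 : U ≠ univ) :
    modScore G (pairP U h1 h2) = bipScore G U := by
  have hne : U ≠ Uᶜ := by
    intro h
    obtain ⟨a, ha⟩ := h1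
    exact (Finset.mem_compl.mp (h ▸ ha)) ha
  unfold modScore bipScore
  rw [pairP_parts, Finset.sum_pair hne, Finset.sum_pair hne]

lemma modScore_indiscrete (hm : 1 ≤ numEdges G) (hU : (univ : Finset V) ≠ ⊥) :
    modScore G (Finpartition.indiscrete hU) = 0 := by
  have hm0 : (0:ℝ) < (numEdges G : ℝ) := by exact_mod_cast hm
  unfold modScore
  have : (Finpartition.indiscrete hU).parts = {(univ : Finset V)} := rfl
  rw [this, Finset.sum_singleton, Finset.sum_singleton, edgesIn_univ, vol_univ]
  push_cast
  field_simp
  ring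

lemma sum_edgesIn_le (P : Finpartition (univ : Finset V)) :
    ∑ A ∈ P.parts, edgesIn G A ≤ numEdges G := by
  unfold edgesIn numEdges
  rw [← Finset.card_biUnion]
  · exact Finset.card_le_card (fun e he => (Finset.mem_biUnion.mp he).choose_spec.2 |> Finset.mem_filter.mp |>.1)
  · intro A hA B hB hAB
    refine Finset.disjoint_left.mpr fun e heA heB => ?_
    have h1 := (Finset.mem_filter.mp heA).2
    have h2 := (Finset.mem_filter.mp heB).2
    have he := (Finset.mem_filter.mp heA).1
    obtain ⟨a, b⟩ := e
    have hd := P.disjoint hA hB hAB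
    exact Finset.disjoint_left.mp hd (h1 a (Sym2.mem_mk_left a b)) (h2 a (Sym2.mem_mk_left a b))

lemma modScore_le_one (hm : 1 ≤ numEdges G) (P : Finpartition (univ : Finset V)) :
    modScore G P ≤ 1 := by
  have hm0 : (0:ℝ) < (numEdges G : ℝ) := by exact_mod_cast hm
  unfold modScore
  have h1 : (∑ A ∈ P.parts, (edgesIn G A : ℝ)) / (numEdges G : ℝ) ≤ 1 := by
    rw [div_le_one hm0]
    exact_mod_cast Nat.cast_le.mpr (sum_edgesIn_le G P) |>.trans_eq (by push_cast; ring)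
  have h2 : (0:ℝ) ≤ (∑ A ∈ P.parts, (vol G A : ℝ) ^ 2) / (4 * (numEdges G : ℝ) ^ 2) := by
    positivity
  linarith

end Aux

theorem stmt1 {V : Type*} [Fintype V] (G : SimpleGraph V) (hm : 1 ≤ numEdges G) :
    (modularity G = 0 ↔
      ∀ U : Finset V, U.Nonempty → U ≠ univ → bipScore G U ≤ 0)
    ∧ (modularity G = 0 ↔
      ∀ U : Finset V, U.Nonempty → U ≠ univ →
        2 * (edgesIn G U : ℤ) * (2 * numEdges G) - (vol G U : ℤ) ^ 2 ≤ 0) := by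
  classical
  have hm0 : (0:ℝ) < (numEdges G : ℝ) := by exact_mod_cast hm
  have h2m : (0:ℝ) < 2 * (numEdges G : ℝ) ^ 2 := by positivity
  obtain ⟨e0, -⟩ := Finset.card_pos.mp hm
  have hVne : Nonempty V := ⟨e0.out.1⟩
  have hU0 : (univ : Finset V) ≠ ⊥ := by
    simpa [Finset.bot_eq_empty] using Finset.univ_nonempty.ne_empty
  have hPne : Nonempty (Finpartition (univ : Finset V)) := ⟨Finpartition.indiscrete hU0⟩
  have hbdd : BddAbove (Set.range (modScore G)) :=
    ⟨1, by rintro x ⟨P, rfl⟩; exact modScore_le_one G hm P⟩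
  have hmain : modularity G = 0 ↔
      (∀ U : Finset V, U.Nonempty → U ≠ univ →
        2 * (edgesIn G U : ℤ) * (2 * numEdges G) - (vol G U : ℤ) ^ 2 ≤ 0) := by
    constructor
    · intro h0 U h1 h2
      have hb : modScore G (pairP U h1 h2) ≤ modularity G := le_ciSup hbdd _
      rw [modScore_pairP, bipScore_eq G hm U, h0] at hb
      have hx : ((2 * (edgesIn G U : ℤ) * (2 * numEdges G) - (vol G U : ℤ) ^ 2 : ℤ) : ℝ) ≤ 0 := by
        by_contra hc
        push_neg at hc
        have := div_pos hc h2m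
        linarith
      exact_mod_cast hx
    · intro hp
      have hle : ∀ P, modScore G P ≤ 0 := by
        intro P
        rw [modScore_eq G hm]
        apply div_nonpos_of_nonpos_of_nonneg _ (by positivity)
        apply Finset.sum_nonpos
        intro A hA
        by_cases hAu : A = univ
        · rw [hAu, edgesIn_univ, vol_univ]
          push_cast
          nlinarith [hm0]
        · exact_mod_cast hp A (P.nonempty_of_mem_parts hA) hAu
      have h1 : modularity G ≤ 0 := ciSup_le hle
      have h2 : (0:ℝ) ≤ modularity G := by
        rw [← modScore_indiscrete G hm hU0]
        exact le_ciSup hbdd _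
      linarith
  have hpt : ∀ U : Finset V, (bipScore G U ≤ 0 ↔
      2 * (edgesIn G U : ℤ) * (2 * numEdges G) - (vol G U : ℤ) ^ 2 ≤ 0) := by
    intro U
    rw [bipScore_eq G hm U, div_nonpos_iff]
    constructor
    · rintro (⟨ha, hb⟩ | ⟨ha, -⟩)
      · linarith
      · exact_mod_cast ha
    · intro h
      exact Or.inr ⟨by exact_mod_cast h, le_of_lt h2m⟩
  exact ⟨hmain.trans (forall_congr' fun U => forall_congr' fun h1 => forall_congr' fun h2 =>
    (hpt U).symm), hmain⟩
end

section
/- Let G be a graph on vertex set V, let U be a proper nonempty subset of V, and let G' be obtained from G by deleting one edge between U and V∖U and adding one edge inside U or inside V∖U (at the location of a missing edge). Then p_{G'}(U) > p_G(U), where p_H(U) = 2e_H(U)·vol(H) − vol_H(U)². -/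
open Finset
open scoped Classical

lemma pairsum {V : Type*} [Fintype V] (p q : V) (hpq : p ≠ q) (S : Finset V) :
    ∑ v ∈ S, ∑ w ∈ (univ : Finset V), (if s(v,w) = s(p,q) then (1:ℤ) else 0)
      = (if p ∈ S then 1 else 0) + (if q ∈ S then 1 else 0) := by
  have h : ∀ v ∈ S, ∑ w ∈ (univ : Finset V), (if s(v,w) = s(p,q) then (1:ℤ) else 0)
      = (if v = p then 1 else 0) + (if v = q then 1 else 0) := by
    intro v _
    simp only [Sym2.eq_iff]
    by_cases hvp : v = p <;> by_cases hvq : v = q <;>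
      simp_all [Finset.sum_ite_eq', hpq.symm]
  rw [Finset.sum_congr rfl h, Finset.sum_add_distrib]
  simp [Finset.sum_ite_eq', eq_comm]

lemma vol_cast {V : Type*} [Fintype V] (G : SimpleGraph V) (S : Finset V) :
    (vol G S : ℤ) = ∑ v ∈ S, ∑ w ∈ (univ : Finset V), (if G.Adj v w then 1 else 0 : ℤ) := by
  rw [vol]
  push_cast
  refine Finset.sum_congr rfl fun v _ => ?_
  rw [SimpleGraph.degree, SimpleGraph.neighborFinset_eq_filter, Finset.card_filter]
  push_cast
  simp

theorem stmt2 {V : Type*} [Fintype V] (G G' : SimpleGraph V) (U : Finset V)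
    (hU : U.Nonempty) (hU' : U ≠ univ)
    (x y a b : V) (hx : x ∈ U) (hy : y ∉ U) (hxy : G.Adj x y)
    (hab : a ≠ b) (hnadj : ¬ G.Adj a b)
    (hin : (a ∈ U ∧ b ∈ U) ∨ (a ∉ U ∧ b ∉ U))
    (hG' : ∀ u v, G'.Adj u v ↔ ((G.Adj u v ∧ s(u, v) ≠ s(x, y)) ∨ s(u, v) = s(a, b))) :
    2 * (edgesIn G U : ℤ) * (2 * numEdges G) - (vol G U : ℤ) ^ 2
      < 2 * (edgesIn G' U : ℤ) * (2 * numEdges G') - (vol G' U : ℤ) ^ 2 := by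
  have hne : s(a,b) ≠ s(x,y) := by
    intro h
    exact hnadj (by rw [← SimpleGraph.mem_edgeSet, h]; exact hxy)
  have hxyE : s(x,y) ∈ G.edgeFinset := SimpleGraph.mem_edgeFinset.mpr hxy
  have habE : s(a,b) ∉ G.edgeFinset := fun h => hnadj (SimpleGraph.mem_edgeFinset.mp h)
  have hEF : G'.edgeFinset = insert s(a,b) (G.edgeFinset.erase s(x,y)) := by
    ext e
    induction e with
    | _ u v =>
      simp only [SimpleGraph.mem_edgeFinset, Finset.mem_insert, Finset.mem_erase, hG',
        SimpleGraph.mem_edgeSet]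
      tauto
  -- numEdges
  have hm : numEdges G' = numEdges G := by
    rw [numEdges, numEdges, hEF, Finset.card_insert_of_notMem
      (fun h => habE (Finset.mem_of_mem_erase h)), Finset.card_erase_of_mem hxyE,
      Nat.sub_add_cancel (Finset.card_pos.mpr ⟨_, hxyE⟩)]
  -- edgesIn
  have hPxy : ¬ (∀ v ∈ s(x,y), v ∈ U) := fun h => hy (h y (Sym2.mem_mk_right x y))
  have hfil : (G'.edgeFinset.filter (fun e => ∀ v ∈ e, v ∈ U))
      = if (∀ v ∈ s(a,b), v ∈ U)
        then insert s(a,b) (G.edgeFinset.filter (fun e => ∀ v ∈ e, v ∈ U))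
        else (G.edgeFinset.filter (fun e => ∀ v ∈ e, v ∈ U)) := by
    rw [hEF, Finset.filter_insert, Finset.filter_erase,
      Finset.erase_eq_of_notMem (fun h => hPxy (Finset.mem_filter.mp h).2)]
  -- vol
  have hvol : ∀ S : Finset V, (vol G' S : ℤ) = (vol G S : ℤ)
      - ((if x ∈ S then 1 else 0) + (if y ∈ S then 1 else 0))
      + ((if a ∈ S then 1 else 0) + (if b ∈ S then 1 else 0)) := by
    intro S
    have key : ∀ v w : V, (if G'.Adj v w then (1:ℤ) else 0)
        = (if G.Adj v w then 1 else 0) - (if s(v,w) = s(x,y) then 1 else 0)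
          + (if s(v,w) = s(a,b) then 1 else 0) := by
      intro v w
      by_cases h1 : s(v,w) = s(x,y)
      · have hAdj : G.Adj v w := by rw [← SimpleGraph.mem_edgeSet, h1]; exact hxy
        have h2 : s(v,w) ≠ s(a,b) := fun h => hne (h.symm.trans h1)
        have hG'f : ¬ G'.Adj v w := by
          rw [hG']
          rintro (⟨_, hc⟩ | hc)
          · exact hc h1
          · exact h2 hc
        rw [if_pos hAdj, if_neg hG'f, if_pos h1, if_neg h2]; ring
      · by_cases h2 : s(v,w) = s(a,b)
        · have hna : ¬ G.Adj v w := fun h =>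
            hnadj (by rw [← SimpleGraph.mem_edgeSet, ← h2]; exact h)
          have hG't : G'.Adj v w := by rw [hG']; exact Or.inr h2
          rw [if_pos hG't, if_neg hna, if_neg h1, if_pos h2]; ring
        · have heq : G'.Adj v w ↔ G.Adj v w := by
            rw [hG']
            constructor
            · rintro (⟨h, _⟩ | hc)
              · exact h
              · exact absurd hc h2
            · exact fun h => Or.inl ⟨h, h1⟩
          rw [if_neg h1, if_neg h2]
          by_cases h3 : G.Adj v w
          · rw [if_pos h3, if_pos (heq.mpr h3)]; ring
          · rw [if_neg h3, if_neg (fun h => h3 (heq.mp h))]; ring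
    rw [vol_cast, vol_cast]
    simp only [key, Finset.sum_add_distrib, Finset.sum_sub_distrib]
    rw [pairsum x y hxy.ne S, pairsum a b hab S]
  -- bounds
  have hdegx : 1 ≤ G.degree x := by
    rw [Nat.one_le_iff_ne_zero, ← Nat.pos_iff_ne_zero, G.degree_pos_iff_exists_adj]
    exact ⟨y, hxy⟩
  have hdegy : 1 ≤ G.degree y := by
    rw [Nat.one_le_iff_ne_zero, ← Nat.pos_iff_ne_zero, G.degree_pos_iff_exists_adj]
    exact ⟨x, hxy.symm⟩
  have hvolx : 1 ≤ vol G U := le_trans hdegx (Finset.single_le_sum (f := fun v => G.degree v)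
    (fun i _ => Nat.zero_le _) hx)
  have hub : vol G U + 1 ≤ 2 * numEdges G := by
    have hsum : vol G U + vol G Uᶜ = 2 * numEdges G := by
      rw [vol, vol, Finset.sum_add_sum_compl]
      exact G.sum_degrees_eq_twice_card_edges
    have hvc : 1 ≤ vol G Uᶜ := le_trans hdegy (Finset.single_le_sum
      (f := fun v => G.degree v) (fun i _ => Nat.zero_le _) (Finset.mem_compl.mpr hy))
    omega
  have hubZ : (vol G U : ℤ) + 1 ≤ 2 * numEdges G := by exact_mod_cast hub
  have hvolxZ : (1 : ℤ) ≤ vol G U := by exact_mod_cast hvolx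
  rw [hm]
  rcases hin with ⟨ha, hb⟩ | ⟨ha, hb⟩
  · -- inside U
    have hEI : (edgesIn G' U : ℤ) = edgesIn G U + 1 := by
      rw [edgesIn, edgesIn, hfil, if_pos (by intro v hv; rcases Sym2.mem_iff.mp hv with rfl | rfl
        <;> assumption), Finset.card_insert_of_notMem (fun h => habE (Finset.mem_filter.mp h).1)]
      push_cast; ring
    have hV : (vol G' U : ℤ) = vol G U + 1 := by
      rw [hvol U]; simp [hx, hy, ha, hb]; ring
    rw [hEI, hV]
    nlinarith [hubZ]
  · -- outside U
    have hEI : (edgesIn G' U : ℤ) = edgesIn G U := by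
      rw [edgesIn, edgesIn, hfil, if_neg (fun h => ha (h a (Sym2.mem_mk_left a b)))]
    have hV : (vol G' U : ℤ) = vol G U - 1 := by
      rw [hvol U]; simp [hx, hy, ha, hb]
    rw [hEI, hV]
    nlinarith [hvolxZ]
end

section
/- For every n ≥ 4, there exists a graph G obtained from the complete graph K_n by deleting exactly ⌊n/2⌋ + 1 edges such that q*(G) > 0. Concretely, partition [n] into parts A, B of sizes ⌈n/2⌉ and ⌊n/2⌋, and delete any ⌊n/2⌋ + 1 edges between A and B; the resulting graph G satisfies q_{(A,B)}(G) > 0. -/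
open Finset
open scoped Classical

lemma card_fin_filter (n : ℕ) (P : ℕ → Prop) [DecidablePred P] :
    ((univ : Finset (Fin n)).filter (fun v => P v.val)).card
      = ((Finset.range n).filter P).card := by
  classical
  rw [← Finset.card_image_of_injective _ Fin.val_injective]
  congr 1
  ext m
  simp only [Finset.mem_image, Finset.mem_filter, Finset.mem_univ, true_and,
    Finset.mem_range]
  constructor
  · rintro ⟨v, hv, rfl⟩; exact ⟨v.isLt, hv⟩
  · rintro ⟨hm, hP⟩; exact ⟨⟨m, hm⟩, hP, rfl⟩

lemma card_fin_lt (n r : ℕ) (h : r ≤ n) :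
    ((univ : Finset (Fin n)).filter (fun v => v.val < r)).card = r := by
  rw [card_fin_filter n (fun m => m < r)]
  have : (Finset.range n).filter (fun m => m < r) = Finset.range r := by
    ext m; simp only [Finset.mem_filter, Finset.mem_range]; omega
  rw [this, Finset.card_range]

lemma card_fin_Ico (n l r : ℕ) (h : r ≤ n) :
    ((univ : Finset (Fin n)).filter (fun v => l ≤ v.val ∧ v.val < r)).card = r - l := by
  rw [card_fin_filter n (fun m => l ≤ m ∧ m < r)]
  have : (Finset.range n).filter (fun m => l ≤ m ∧ m < r) = Finset.Ico l r := by
    ext m; simp only [Finset.mem_filter, Finset.mem_range, Finset.mem_Ico]; omega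
  rw [this, Nat.card_Ico]

lemma card_fin_gt (n l : ℕ) :
    ((univ : Finset (Fin n)).filter (fun v => l < v.val)).card = n - (l+1) := by
  rw [card_fin_filter n (fun m => l < m)]
  have : (Finset.range n).filter (fun m => l < m) = Finset.Ico (l+1) n := by
    ext m; simp only [Finset.mem_filter, Finset.mem_range, Finset.mem_Ico]; omega
  rw [this, Nat.card_Ico]

section EdgesIn
variable {V : Type*} [Fintype V]

/-- If `G` is complete on `S`, the number of edges inside `S` satisfies the formula. -/
lemma edgesIn_complete_on (G : SimpleGraph V) (S : Finset V)
    (h : ∀ u v, u ∈ S → v ∈ S → u ≠ v → G.Adj u v) :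
    2 * edgesIn G S = S.card * (S.card - 1) := by
  classical
  let H : SimpleGraph V :=
    { Adj := fun u v => u ≠ v ∧ u ∈ S ∧ v ∈ S
      symm := ⟨by rintro u v ⟨h1, h2, h3⟩; exact ⟨h1.symm, h3, h2⟩⟩
      loopless := ⟨by rintro u ⟨h1, -⟩; exact h1 rfl⟩ }
  have he : G.edgeFinset.filter (fun e => ∀ v ∈ e, v ∈ S) = H.edgeFinset := by
    ext e
    induction e with
    | _ u v =>
      simp only [Finset.mem_filter, SimpleGraph.mem_edgeFinset, SimpleGraph.mem_edgeSet,
        Sym2.mem_iff, forall_eq_or_imp, forall_eq]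
      constructor
      · rintro ⟨hadj, hu, hv⟩; exact ⟨G.ne_of_adj hadj, hu, hv⟩
      · rintro ⟨hne, hu, hv⟩; exact ⟨h u v hu hv hne, hu, hv⟩
  have hdeg : ∀ v : V, H.degree v = if v ∈ S then S.card - 1 else 0 := by
    intro v
    rw [SimpleGraph.degree, SimpleGraph.neighborFinset_eq_filter]
    by_cases hv : v ∈ S
    · rw [if_pos hv]
      have : Finset.univ.filter (H.Adj v) = S.erase v := by
        ext w
        simp only [Finset.mem_filter, Finset.mem_univ, true_and, Finset.mem_erase]
        constructor
        · rintro ⟨h1, -, h3⟩; exact ⟨fun hh => h1 hh.symm, h3⟩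
        · rintro ⟨h1, h2⟩; exact ⟨fun hh => h1 hh.symm, hv, h2⟩
      rw [this, Finset.card_erase_of_mem hv]
    · rw [if_neg hv]
      have : Finset.univ.filter (H.Adj v) = ∅ := by
        ext w
        simp only [Finset.mem_filter, Finset.mem_univ, true_and, Finset.notMem_empty,
          iff_false]
        rintro ⟨-, h2, -⟩; exact hv h2
      rw [this, Finset.card_empty]
  have hsum := H.sum_degrees_eq_twice_card_edges
  rw [edgesIn, he, ← hsum]
  have : ∑ v : V, H.degree v = ∑ v ∈ S, (S.card - 1) := by
    rw [Finset.sum_congr rfl (fun v _ => hdeg v)]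
    rw [Finset.sum_ite_mem, Finset.univ_inter]
  rw [this, Finset.sum_const, smul_eq_mul]

end EdgesIn

lemma card_fin_ge (n l : ℕ) :
    ((univ : Finset (Fin n)).filter (fun v => l ≤ v.val)).card = n - l := by
  rw [card_fin_filter n (fun m => l ≤ m)]
  have : (Finset.range n).filter (fun m => l ≤ m) = Finset.Ico l n := by
    ext m; simp only [Finset.mem_filter, Finset.mem_range, Finset.mem_Ico]; omega
  rw [this, Nat.card_Ico]

def delP (a : ℕ) {n : ℕ} (u v : Fin n) : Prop :=
  (u.val = 0 ∧ a ≤ v.val) ∨ (a ≤ u.val ∧ v.val = 0) ∨ (u.val = 1 ∧ v.val = a) ∨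
    (u.val = a ∧ v.val = 1)

def myG (n a : ℕ) : SimpleGraph (Fin n) where
  Adj u v := u ≠ v ∧ ¬ delP a u v
  symm := ⟨by
    rintro u v ⟨h1, h2⟩
    refine ⟨h1.symm, fun hd => h2 ?_⟩
    unfold delP at *
    tauto⟩
  loopless := ⟨by rintro u ⟨h1, -⟩; exact h1 rfl⟩

section Degrees
variable {n a : ℕ}

lemma degree_eq_sub (G : SimpleGraph (Fin n)) (v : Fin n) :
    G.degree v = n - ((univ : Finset (Fin n)).filter (fun w => ¬ G.Adj v w)).card := by
  classical
  rw [SimpleGraph.degree, SimpleGraph.neighborFinset_eq_filter]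
  have h := Finset.card_filter_add_card_filter_not
    (s := (univ : Finset (Fin n))) (p := fun w => G.Adj v w)
  simp only [Finset.card_univ, Fintype.card_fin] at h
  have h2 : ((univ : Finset (Fin n)).filter (fun w => G.Adj v w)).card
      = ((univ : Finset (Fin n)).filter (G.Adj v)).card := by congr 1
  omega

lemma myG_deg0 (ha : 2 ≤ a) (han : a + 2 ≤ n) (v : Fin n) (hv : v.val = 0) :
    (myG n a).degree v = a - 1 := by
  rw [degree_eq_sub]
  have hset : (univ : Finset (Fin n)).filter (fun w => ¬ (myG n a).Adj v w)
      = insert v ((univ : Finset (Fin n)).filter (fun w => a ≤ w.val)) := by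
    ext w
    simp only [Finset.mem_filter, Finset.mem_univ, true_and, Finset.mem_insert,
      myG, delP, ne_eq, Fin.ext_iff, not_and, not_not, not_forall]
    constructor
    · intro hw
      by_cases hwv : (w : ℕ) = (v : ℕ)
      · left; exact hwv
      · right
        have := hw (by omega)
        omega
    · intro hw
      rcases hw with hw | hw
      · intro hc; omega
      · intro _; omega
  have hnot : v ∉ (univ : Finset (Fin n)).filter (fun w => a ≤ w.val) := by
    simp only [Finset.mem_filter, Finset.mem_univ, true_and]; omega
  rw [hset, Finset.card_insert_of_notMem hnot, card_fin_ge]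
  omega

end Degrees

section Degrees2
variable {n a : ℕ}

lemma myG_deg1 (ha : 2 ≤ a) (han : a + 2 ≤ n) (v : Fin n) (hv : v.val = 1) :
    (myG n a).degree v = n - 2 := by
  rw [degree_eq_sub]
  have hset : (univ : Finset (Fin n)).filter (fun w => ¬ (myG n a).Adj v w)
      = {v, ⟨a, by omega⟩} := by
    ext w
    simp only [Finset.mem_filter, Finset.mem_univ, true_and, Finset.mem_insert,
      Finset.mem_singleton, myG, delP, ne_eq, Fin.ext_iff, not_and, not_not]
    omega
  rw [hset]
  have : ({v, ⟨a, by omega⟩} : Finset (Fin n)).card = 2 := by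
    rw [Finset.card_insert_of_notMem (by simp [Fin.ext_iff]; omega), Finset.card_singleton]
  omega

lemma myG_degA (ha : 2 ≤ a) (han : a + 2 ≤ n) (v : Fin n) (hv : 2 ≤ v.val ∧ v.val < a) :
    (myG n a).degree v = n - 1 := by
  rw [degree_eq_sub]
  have hset : (univ : Finset (Fin n)).filter (fun w => ¬ (myG n a).Adj v w) = {v} := by
    ext w
    simp only [Finset.mem_filter, Finset.mem_univ, true_and,
      Finset.mem_singleton, myG, delP, ne_eq, Fin.ext_iff, not_and, not_not]
    omega
  rw [hset, Finset.card_singleton]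

lemma myG_dega (ha : 2 ≤ a) (han : a + 2 ≤ n) (v : Fin n) (hv : v.val = a) :
    (myG n a).degree v = n - 3 := by
  rw [degree_eq_sub]
  have hset : (univ : Finset (Fin n)).filter (fun w => ¬ (myG n a).Adj v w)
      = {v, ⟨0, by omega⟩, ⟨1, by omega⟩} := by
    ext w
    simp only [Finset.mem_filter, Finset.mem_univ, true_and, Finset.mem_insert,
      Finset.mem_singleton, myG, delP, ne_eq, Fin.ext_iff, not_and, not_not]
    omega
  rw [hset]
  have : ({v, ⟨0, by omega⟩, ⟨1, by omega⟩} : Finset (Fin n)).card = 3 := by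
    rw [Finset.card_insert_of_notMem (by simp [Fin.ext_iff]; omega),
      Finset.card_insert_of_notMem (by simp [Fin.ext_iff]), Finset.card_singleton]
  omega

lemma myG_degB (ha : 2 ≤ a) (han : a + 2 ≤ n) (v : Fin n) (hv : a < v.val) :
    (myG n a).degree v = n - 2 := by
  rw [degree_eq_sub]
  have hset : (univ : Finset (Fin n)).filter (fun w => ¬ (myG n a).Adj v w)
      = {v, ⟨0, by omega⟩} := by
    ext w
    simp only [Finset.mem_filter, Finset.mem_univ, true_and, Finset.mem_insert,
      Finset.mem_singleton, myG, delP, ne_eq, Fin.ext_iff, not_and, not_not]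
    omega
  rw [hset]
  have : ({v, ⟨0, by omega⟩} : Finset (Fin n)).card = 2 := by
    rw [Finset.card_insert_of_notMem (by simp [Fin.ext_iff]; omega), Finset.card_singleton]
  omega

end Degrees2

section Vol
variable {n a : ℕ}

lemma myG_volA (ha : 2 ≤ a) (han : a + 2 ≤ n) :
    vol (myG n a) ((univ : Finset (Fin n)).filter (fun v => v.val < a)) + (n + 1)
      = a * n := by
  have hA : (univ : Finset (Fin n)).filter (fun v => v.val < a)
      = insert ⟨0, by omega⟩ (insert ⟨1, by omega⟩
          ((univ : Finset (Fin n)).filter (fun v => 2 ≤ v.val ∧ v.val < a))) := by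
    ext w
    simp only [Finset.mem_filter, Finset.mem_univ, true_and, Finset.mem_insert, Fin.ext_iff]
    omega
  rw [vol, hA, Finset.sum_insert (by simp [Fin.ext_iff]),
    Finset.sum_insert (by simp only [Finset.mem_filter, Finset.mem_univ, true_and]; omega)]
  have hR : ∑ v ∈ (univ : Finset (Fin n)).filter (fun v => 2 ≤ v.val ∧ v.val < a),
      (myG n a).degree v = (a - 2) * (n - 1) := by
    rw [Finset.sum_congr rfl (fun v hv => myG_degA ha han v (by
      simpa using (Finset.mem_filter.mp hv).2)), Finset.sum_const, card_fin_Ico n 2 a (by omega),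
      smul_eq_mul]
  rw [hR, myG_deg0 ha han _ rfl, myG_deg1 ha han _ rfl]
  zify [show 1 ≤ a by omega, show 2 ≤ a by omega, show 1 ≤ n by omega, show 2 ≤ n by omega]
  ring

lemma myG_volB (ha : 2 ≤ a) (han : a + 2 ≤ n) :
    vol (myG n a) ((univ : Finset (Fin n)).filter (fun v => ¬ v.val < a)) + (n - a + 1)
      = (n - a) * (n - 1) := by
  have hB : (univ : Finset (Fin n)).filter (fun v => ¬ v.val < a)
      = insert ⟨a, by omega⟩ ((univ : Finset (Fin n)).filter (fun v => a < v.val)) := by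
    ext w
    simp only [Finset.mem_filter, Finset.mem_univ, true_and, Finset.mem_insert, Fin.ext_iff]
    omega
  have hmem : (⟨a, by omega⟩ : Fin n) ∉ (univ : Finset (Fin n)).filter (fun v => a < v.val) := by
    simp only [Finset.mem_filter, Finset.mem_univ, true_and]
    omega
  rw [vol, hB, Finset.sum_insert hmem]
  have hS : ∑ v ∈ (univ : Finset (Fin n)).filter (fun v => a < v.val),
      (myG n a).degree v = (n - (a + 1)) * (n - 2) := by
    have h1 : ∀ v ∈ (univ : Finset (Fin n)).filter (fun v => a < v.val),
        (myG n a).degree v = n - 2 := by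
      intro v hv
      exact myG_degB ha han v (by simpa using (Finset.mem_filter.mp hv).2)
    rw [Finset.sum_congr rfl h1, Finset.sum_const, card_fin_gt n a, smul_eq_mul]
  rw [hS, myG_dega ha han _ rfl]
  zify [show 3 ≤ n by omega, show a + 1 ≤ n by omega, show a ≤ n by omega,
    show 2 ≤ n by omega, show 1 ≤ n by omega]
  ring

lemma myG_edgesIn_A (ha : 2 ≤ a) (han : a + 2 ≤ n) :
    2 * edgesIn (myG n a) ((univ : Finset (Fin n)).filter (fun v => v.val < a))
      = a * (a - 1) := by
  rw [edgesIn_complete_on _ _ (by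
    intro u v hu hv huv
    simp only [Finset.mem_filter, Finset.mem_univ, true_and] at hu hv
    refine ⟨huv, ?_⟩
    simp only [delP]
    omega), card_fin_lt n a (by omega)]

lemma myG_edgesIn_B (ha : 2 ≤ a) (han : a + 2 ≤ n) :
    2 * edgesIn (myG n a) ((univ : Finset (Fin n)).filter (fun v => ¬ v.val < a))
      = (n - a) * (n - a - 1) := by
  rw [edgesIn_complete_on _ _ (by
    intro u v hu hv huv
    simp only [Finset.mem_filter, Finset.mem_univ, true_and] at hu hv
    refine ⟨huv, ?_⟩
    simp only [delP]
    omega)]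
  have hc : ((univ : Finset (Fin n)).filter (fun v : Fin n => ¬ v.val < a)).card = n - a := by
    rw [card_fin_filter n (fun m => ¬ m < a)]
    have : (Finset.range n).filter (fun m => ¬ m < a) = Finset.Ico a n := by
      ext m; simp only [Finset.mem_filter, Finset.mem_range, Finset.mem_Ico]; omega
    rw [this, Nat.card_Ico]
  rw [hc]

end Vol

lemma score_pos {E F M VA VB : ℝ} (hM : 0 < M) (h : VA^2 + VB^2 < 4*M*(E+F)) :
    0 < (E + F)/M - (VA^2 + VB^2)/(4*M^2) := by
  rw [sub_pos, div_lt_div_iff₀ (by positivity) hM]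
  nlinarith [mul_lt_mul_of_pos_right h hM]


lemma modularity_pos_of_bipScore {V : Type*} [Fintype V] (G : SimpleGraph V) (A : Finset V)
    (hA : A.Nonempty) {x : V} (hx : x ∉ A) (h : 0 < bipScore G A) : 0 < modularity G := by
  classical
  have hAc : Aᶜ.Nonempty := ⟨x, Finset.mem_compl.mpr hx⟩
  have hAAc : A ≠ Aᶜ := by
    intro he
    obtain ⟨x, hx⟩ := hA
    have hx2 : x ∈ Aᶜ := he ▸ hx
    exact (Finset.mem_compl.mp hx2) hx
  have hsup : ({A, Aᶜ} : Finset (Finset V)).sup id = univ := by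
    rw [Finset.sup_insert, Finset.sup_singleton, id, id, Finset.sup_eq_union,
      Finset.union_compl]
  let P : Finpartition (univ : Finset V) :=
    { parts := {A, Aᶜ}
      supIndep := (Finset.supIndep_pair hAAc).2 disjoint_compl_right
      sup_parts := hsup
      bot_notMem := by
        simp only [Finset.bot_eq_empty, Finset.mem_insert, Finset.mem_singleton]
        push_neg
        constructor
        · intro hh
          obtain ⟨x, hx⟩ := hA
          rw [← hh] at hx
          exact absurd hx (Finset.notMem_empty _)
        · intro hh
          obtain ⟨x, hx⟩ := hAc
          rw [← hh] at hx
          exact absurd hx (Finset.notMem_empty _) }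
  have hms : modScore G P = bipScore G A := by
    unfold modScore bipScore
    rw [show P.parts = {A, Aᶜ} from rfl, Finset.sum_pair hAAc, Finset.sum_pair hAAc]
  have hbdd : BddAbove (Set.range (modScore G)) := (Set.finite_range _).bddAbove
  calc (0:ℝ) < bipScore G A := h
    _ = modScore G P := hms.symm
    _ ≤ modularity G := le_ciSup hbdd P

set_option maxHeartbeats 1600000 in
theorem stmt4 (n : ℕ) (hn : 4 ≤ n) :
    ∃ (G : SimpleGraph (Fin n)) (A : Finset (Fin n)),
      A.card = (n + 1) / 2 ∧
      numEdges G = Nat.choose n 2 - (n / 2 + 1) ∧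
      (∀ u v : Fin n, u ≠ v → ¬ G.Adj u v → ((u ∈ A ∧ v ∉ A) ∨ (u ∉ A ∧ v ∈ A))) ∧
      0 < bipScore G A ∧ 0 < modularity G := by
  classical
  obtain ⟨a, hadef⟩ : ∃ x, x = (n + 1) / 2 := ⟨_, rfl⟩
  have ha : 2 ≤ a := by omega
  have han : a + 2 ≤ n := by omega
  obtain ⟨G, hG⟩ : ∃ G', G' = myG n a := ⟨_, rfl⟩
  obtain ⟨A, hAdef⟩ : ∃ A', A' = (univ : Finset (Fin n)).filter (fun v : Fin n => v.val < a) :=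
    ⟨_, rfl⟩
  have hAc : Aᶜ = (univ : Finset (Fin n)).filter (fun v => ¬ v.val < a) := by
    rw [hAdef, Finset.compl_filter]
  have hAcard : A.card = a := by rw [hAdef]; exact card_fin_lt n a (by omega)
  -- basic counting facts
  have hvolA : vol G A + (n + 1) = a * n := by
    rw [hG, hAdef]; exact myG_volA ha han
  have hvolB : vol G Aᶜ + (n - a + 1) = (n - a) * (n - 1) := by
    rw [hAc, hG]; exact myG_volB ha han
  have heA : 2 * edgesIn G A = a * (a - 1) := by
    rw [hG, hAdef]; exact myG_edgesIn_A ha han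
  have heB : 2 * edgesIn G Aᶜ = (n - a) * (n - a - 1) := by
    rw [hAc, hG]; exact myG_edgesIn_B ha han
  have h2m : 2 * numEdges G = vol G A + vol G Aᶜ := by
    rw [numEdges, ← SimpleGraph.sum_degrees_eq_twice_card_edges, hAc, hAdef]
    exact (Finset.sum_filter_add_sum_filter_not univ _ _).symm
  -- membership facts
  have h0n : 0 < n := by omega
  have hanlt : a < n := by omega
  have hmem0 : (⟨0, h0n⟩ : Fin n) ∈ A := by
    rw [hAdef]; simp only [Finset.mem_filter, Finset.mem_univ, true_and]; omega
  have hmema : (⟨a, hanlt⟩ : Fin n) ∈ Aᶜ := by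
    rw [hAc]; simp only [Finset.mem_filter, Finset.mem_univ, true_and]; omega
  have hAAc : A ≠ Aᶜ := by
    intro h
    have h2 := hmem0
    rw [h, Finset.mem_compl] at h2
    exact h2 hmem0
  -- the key numerical facts, by parity
  have key : numEdges G = Nat.choose n 2 - (n / 2 + 1) ∧ 0 < bipScore G A := by
    have hbip :
        bipScore G A = ((edgesIn G A : ℝ) + (edgesIn G Aᶜ : ℝ)) / (numEdges G : ℝ)
          - ((vol G A : ℝ) ^ 2 + (vol G Aᶜ : ℝ) ^ 2) / (4 * (numEdges G : ℝ) ^ 2) := by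
      unfold bipScore
      congr!
    rcases Nat.even_or_odd n with he | ho
    · -- even case: n = k + k, a = k
      obtain ⟨k, rfl⟩ := he
      have hk : 2 ≤ k := by omega
      have hak : a = k := by omega
      subst hak
      -- subtraction-free nat identities
      have hvolA2 : vol G A + (2 * a + 1) = 2 * (a * a) := by
        zify at hvolA ⊢; linear_combination hvolA
      have hvolB2 : vol G Aᶜ + (2 * a + 1) = 2 * (a * a) := by
        zify [show a ≤ a + a by omega, show 1 ≤ a + a by omega] at hvolB ⊢
        linear_combination hvolB
      have heA2 : 2 * edgesIn G A + a = a * a := by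
        zify [show 1 ≤ a by omega] at heA ⊢; linear_combination heA
      have heB2 : 2 * edgesIn G Aᶜ + a = a * a := by
        zify [show a ≤ a + a by omega, show 1 ≤ a + a - a by omega] at heB ⊢
        linear_combination heB
      have hval : 2 * numEdges G + (4 * a + 2) = 4 * (a * a) := by omega
      constructor
      · have hc : Nat.choose (a + a) 2 = 2 * (a * a) - a := by
          rw [Nat.choose_two_right]
          have h1 : (a + a) * ((a + a) - 1) = 2 * (2 * (a * a) - a) := by
            zify [show 1 ≤ a + a by omega, show a ≤ 2 * (a * a) by nlinarith]
            ring
          rw [h1, Nat.mul_div_cancel_left _ two_pos]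
        rw [hc, show (a + a) / 2 = a by omega]
        generalize hK : a * a = K at hval
        omega
      · -- bipScore > 0
        have hka : (2 : ℝ) ≤ (a : ℝ) := by exact_mod_cast hk
        have RA : (vol G A : ℝ) + (2 * a + 1) = 2 * (a * a) := by exact_mod_cast hvolA2
        have RB : (vol G Aᶜ : ℝ) + (2 * a + 1) = 2 * (a * a) := by exact_mod_cast hvolB2
        have RE : 2 * (edgesIn G A : ℝ) + a = a * a := by exact_mod_cast heA2
        have RF : 2 * (edgesIn G Aᶜ : ℝ) + a = a * a := by exact_mod_cast heB2
        have RM : 2 * (numEdges G : ℝ) + (4 * a + 2) = 4 * (a * a) := by exact_mod_cast hval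
        have hMpos : (0 : ℝ) < (numEdges G : ℝ) := by nlinarith [mul_le_mul_of_nonneg_left hka (by linarith : (0:ℝ) ≤ (a:ℝ))]
        rw [hbip]
        apply score_pos hMpos
        have e1 : (vol G A : ℝ) = 2 * (a:ℝ) * a - 2 * a - 1 := by linarith
        have e2 : (vol G Aᶜ : ℝ) = 2 * (a:ℝ) * a - 2 * a - 1 := by linarith
        have e3 : (edgesIn G A : ℝ) = ((a:ℝ) * a - a) / 2 := by linarith
        have e4 : (edgesIn G Aᶜ : ℝ) = ((a:ℝ) * a - a) / 2 := by linarith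
        have e5 : (numEdges G : ℝ) = 2 * (a:ℝ) * a - 2 * a - 1 := by linarith
        rw [e1, e2, e3, e4, e5]
        nlinarith [hka, sq_nonneg ((a:ℝ) - 2), mul_le_mul_of_nonneg_left hka (by linarith : (0:ℝ) ≤ (a:ℝ))]
    · -- odd case: n = 2k+1, a = k+1
      obtain ⟨k, rfl⟩ := ho
      have hk : 2 ≤ k := by omega
      have hak : a = k + 1 := by omega
      subst hak
      have hvolA2 : vol G A + 1 = 2 * (k * k) + k := by
        zify at hvolA ⊢; linear_combination hvolA
      have hvolB2 : vol G Aᶜ + (k + 1) = 2 * (k * k) := by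
        zify [show k + 1 ≤ 2 * k + 1 by omega, show 1 ≤ 2 * k + 1 by omega] at hvolB ⊢
        linear_combination hvolB
      have heA2 : 2 * edgesIn G A = k * k + k := by
        zify [show 1 ≤ k + 1 by omega] at heA ⊢; linear_combination heA
      have heB2 : 2 * edgesIn G Aᶜ + k = k * k := by
        zify [show k + 1 ≤ 2 * k + 1 by omega,
          show 1 ≤ 2 * k + 1 - (k + 1) by omega] at heB ⊢
        linear_combination heB
      have hval : 2 * numEdges G + 2 = 4 * (k * k) := by omega
      constructor
      · have hc : Nat.choose (2 * k + 1) 2 = 2 * (k * k) + k := by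
          rw [Nat.choose_two_right]
          have h1 : (2 * k + 1) * ((2 * k + 1) - 1) = 2 * (2 * (k * k) + k) := by
            zify [show 1 ≤ 2 * k + 1 by omega]; ring
          rw [h1, Nat.mul_div_cancel_left _ two_pos]
        rw [hc, show (2 * k + 1) / 2 = k by omega]
        generalize hK : k * k = K at hval
        omega
      · have hka : (2 : ℝ) ≤ (k : ℝ) := by exact_mod_cast hk
        have RA : (vol G A : ℝ) + 1 = 2 * (k * k) + k := by exact_mod_cast hvolA2
        have RB : (vol G Aᶜ : ℝ) + (k + 1) = 2 * (k * k) := by exact_mod_cast hvolB2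
        have RE : 2 * (edgesIn G A : ℝ) = k * k + k := by exact_mod_cast heA2
        have RF : 2 * (edgesIn G Aᶜ : ℝ) + k = k * k := by exact_mod_cast heB2
        have RM : 2 * (numEdges G : ℝ) + 2 = 4 * (k * k) := by exact_mod_cast hval
        have hMpos : (0 : ℝ) < (numEdges G : ℝ) := by nlinarith [mul_le_mul_of_nonneg_left hka (by linarith : (0:ℝ) ≤ (k:ℝ))]
        rw [hbip]
        apply score_pos hMpos
        have e1 : (vol G A : ℝ) = 2 * (k:ℝ) * k + k - 1 := by linarith
        have e2 : (vol G Aᶜ : ℝ) = 2 * (k:ℝ) * k - k - 1 := by linarith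
        have e3 : (edgesIn G A : ℝ) = ((k:ℝ) * k + k) / 2 := by linarith
        have e4 : (edgesIn G Aᶜ : ℝ) = ((k:ℝ) * k - k) / 2 := by linarith
        have e5 : (numEdges G : ℝ) = 2 * (k:ℝ) * k - 1 := by linarith
        rw [e1, e2, e3, e4, e5]
        nlinarith [hka, mul_le_mul_of_nonneg_left hka (by linarith : (0:ℝ) ≤ (k:ℝ))]
  have hmod : 0 < modularity G :=
    modularity_pos_of_bipScore G A ⟨_, hmem0⟩ (Finset.mem_compl.mp hmema) key.2
  refine ⟨G, A, by rw [hAcard, hadef], key.1, ?_, key.2, hmod⟩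
  intro u v huv hadj
  have hd : delP a u v := by
    by_contra h
    rw [hG] at hadj
    exact hadj ⟨huv, h⟩
  rw [hAdef]
  simp only [Finset.mem_filter, Finset.mem_univ, true_and]
  unfold delP at hd
  omega
end

section
/- Let G be a graph with m ≥ 2 edges and let A = {A, V∖A} be a bipartition with q_A(G) ≥ 0 and e_G(A, V∖A) ≥ 1. If G' is obtained from G by removing one edge between A and V∖A, then q_A(G') > q_A(G). In fact q_A(G') − q_A(G) ≥ 1/(2m(m−1)). -/
open Finset
open scoped Classical

private lemma stmt5_alg (m e a b : ℝ) (hm : 2 ≤ m) (he : e + 1 ≤ m) (hab : a + b = 2*m)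
    (hS : a^2 + b^2 ≤ 4*e*m) :
    1/(2*m*(m-1)) ≤ (e/(m-1) - ((a-1)^2+(b-1)^2)/(4*(m-1)^2)) - (e/m - (a^2+b^2)/(4*m^2)) := by
  have hm0 : (0:ℝ) < m := by linarith
  have hm1 : (0:ℝ) < m - 1 := by linarith
  have hb : b = 2*m - a := by linarith
  subst hb
  have key : (e/(m-1) - ((a-1)^2+(2*m-a-1)^2)/(4*(m-1)^2)) - (e/m - (a^2+(2*m-a)^2)/(4*m^2))
      - 1/(2*m*(m-1))
      = ((2*m-1)*(4*e*m - (a^2+(2*m-a)^2)) + 4*m^2*(m-1-e) + 2*m) / (4*m^2*(m-1)^2) := by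
    field_simp
    ring
  have h1 : 0 ≤ (2*m-1)*(4*e*m - (a^2+(2*m-a)^2)) := by
    apply mul_nonneg <;> linarith
  have h2 : 0 ≤ 4*m^2*(m-1-e) := by
    apply mul_nonneg (by positivity) (by linarith)
  have h3 : 0 ≤ ((2*m-1)*(4*e*m - (a^2+(2*m-a)^2)) + 4*m^2*(m-1-e) + 2*m) / (4*m^2*(m-1)^2) := by
    apply div_nonneg (by linarith) (by positivity)
  linarith [h3, key]

set_option linter.unreachableTactic false
set_option linter.unusedTactic false

theorem stmt5 {V : Type*} [Fintype V] (G G' : SimpleGraph V) (A : Finset V)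
    (hA : A.Nonempty) (hA' : A ≠ univ)
    (hm : 2 ≤ numEdges G) (hscore : 0 ≤ bipScore G A)
    (hcross : 1 ≤ edgesBetween G A Aᶜ)
    (x y : V) (hx : x ∈ A) (hy : y ∈ Aᶜ) (hxy : G.Adj x y)
    (hG' : ∀ u v, G'.Adj u v ↔ G.Adj u v ∧ s(u, v) ≠ s(x, y)) :
    bipScore G A < bipScore G' A ∧
      1 / (2 * (numEdges G : ℝ) * ((numEdges G : ℝ) - 1))
        ≤ bipScore G' A - bipScore G A := by
  classical
  have hxyne : x ≠ y := G.ne_of_adj hxy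
  have hyA : y ∉ A := by simpa using hy
  have hxAc : x ∉ Aᶜ := by simp [hx]
  have hmem : s(x,y) ∈ G.edgeFinset := by simpa using hxy
  have hE : G'.edgeFinset = G.edgeFinset.erase s(x,y) := by
    ext e
    induction e using Sym2.ind with
    | _ u v =>
      simp only [SimpleGraph.mem_edgeFinset, SimpleGraph.mem_edgeSet, hG', Finset.mem_erase]
      tauto
  have hpos := Finset.card_pos.mpr ⟨_, hmem⟩
  have hm' : numEdges G' + 1 = numEdges G := by
    rw [numEdges, numEdges, hE, Finset.card_erase_of_mem hmem]
    omega
  -- edgesIn unchanged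
  have hnotA : s(x,y) ∉ G.edgeFinset.filter (fun e => ∀ v ∈ e, v ∈ A) := by
    simp only [Finset.mem_filter, not_and]
    intro _ h
    exact hyA (h y (Sym2.mem_mk_right x y))
  have hnotAc : s(x,y) ∉ G.edgeFinset.filter (fun e => ∀ v ∈ e, v ∈ Aᶜ) := by
    simp only [Finset.mem_filter, not_and]
    intro _ h
    exact hxAc (h x (Sym2.mem_mk_left x y))
  have hInA : edgesIn G' A = edgesIn G A := by
    rw [edgesIn, edgesIn, hE, Finset.filter_erase, Finset.erase_eq_of_notMem hnotA]
  have hInAc : edgesIn G' Aᶜ = edgesIn G Aᶜ := by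
    rw [edgesIn, edgesIn, hE, Finset.filter_erase, Finset.erase_eq_of_notMem hnotAc]
  -- e1 + e2 + 1 ≤ m
  have hdisj : Disjoint (G.edgeFinset.filter (fun e => ∀ v ∈ e, v ∈ A))
      (G.edgeFinset.filter (fun e => ∀ v ∈ e, v ∈ Aᶜ)) := by
    rw [Finset.disjoint_left]
    intro e heA heAc
    induction e using Sym2.ind with
    | _ u v =>
      simp only [Finset.mem_filter] at heA heAc
      have h1 := heA.2 u (Sym2.mem_mk_left u v)
      have h2 := heAc.2 u (Sym2.mem_mk_left u v)
      simp at h2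
      exact h2 h1
  have hcount : edgesIn G A + edgesIn G Aᶜ + 1 ≤ numEdges G := by
    have hsub : insert s(x,y) ((G.edgeFinset.filter (fun e => ∀ v ∈ e, v ∈ A)) ∪
        (G.edgeFinset.filter (fun e => ∀ v ∈ e, v ∈ Aᶜ))) ⊆ G.edgeFinset := by
      intro e he
      rcases Finset.mem_insert.mp he with h | h
      · exact h ▸ hmem
      · rcases Finset.mem_union.mp h with h | h <;> exact (Finset.mem_filter.mp h).1
    have hni : s(x,y) ∉ ((G.edgeFinset.filter (fun e => ∀ v ∈ e, v ∈ A)) ∪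
        (G.edgeFinset.filter (fun e => ∀ v ∈ e, v ∈ Aᶜ))) := by
      simp only [Finset.mem_union]
      tauto
    have := Finset.card_le_card hsub
    rw [Finset.card_insert_of_notMem hni, Finset.card_union_of_disjoint hdisj] at this
    simpa [edgesIn, numEdges] using this
  -- degrees
  have hnx : G'.neighborFinset x = (G.neighborFinset x).erase y := by
    ext u
    simp only [SimpleGraph.mem_neighborFinset, hG', Finset.mem_erase,
      SimpleGraph.mem_neighborFinset]
    constructor
    · rintro ⟨h1, h2⟩
      refine ⟨fun h => h2 (by rw [h]), h1⟩
    · rintro ⟨h1, h2⟩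
      refine ⟨h2, fun h => ?_⟩
      rw [Sym2.eq_iff] at h
      rcases h with ⟨h2, h3⟩ | ⟨h2, h3⟩ <;>
        first | exact h1 h2 | exact h1 h3 | exact hxyne h2 | exact hxyne h2.symm |
          exact hxyne h3 | exact hxyne h3.symm
  have hny : G'.neighborFinset y = (G.neighborFinset y).erase x := by
    ext u
    simp only [SimpleGraph.mem_neighborFinset, hG', Finset.mem_erase,
      SimpleGraph.mem_neighborFinset]
    constructor
    · rintro ⟨h1, h2⟩
      refine ⟨fun h => h2 (by rw [h, Sym2.eq_swap]), h1⟩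
    · rintro ⟨h1, h2⟩
      refine ⟨h2, fun h => ?_⟩
      rw [Sym2.eq_iff] at h
      rcases h with ⟨h2, h3⟩ | ⟨h2, h3⟩ <;>
        first | exact h1 h2 | exact h1 h3 | exact hxyne h2 | exact hxyne h2.symm |
          exact hxyne h3 | exact hxyne h3.symm
  have hnv : ∀ v, v ≠ x → v ≠ y → G'.neighborFinset v = G.neighborFinset v := by
    intro v hvx hvy
    ext u
    simp only [SimpleGraph.mem_neighborFinset, hG']
    constructor
    · exact fun h => h.1
    · intro h
      refine ⟨h, fun hh => ?_⟩
      rw [Sym2.eq_iff] at hh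
      rcases hh with ⟨h3, h4⟩ | ⟨h3, h4⟩ <;>
        first | exact hvx h3 | exact hvy h3 | exact hvx h4 | exact hvy h4
  have hdx : G'.degree x + 1 = G.degree x := by
    rw [← SimpleGraph.card_neighborFinset_eq_degree, ← SimpleGraph.card_neighborFinset_eq_degree,
      hnx, Finset.card_erase_of_mem (by simpa using hxy)]
    have : 0 < (G.neighborFinset x).card := Finset.card_pos.mpr ⟨y, by simpa using hxy⟩
    omega
  have hdy : G'.degree y + 1 = G.degree y := by
    rw [← SimpleGraph.card_neighborFinset_eq_degree, ← SimpleGraph.card_neighborFinset_eq_degree,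
      hny, Finset.card_erase_of_mem (by simpa using hxy.symm)]
    have : 0 < (G.neighborFinset y).card := Finset.card_pos.mpr ⟨x, by simpa using hxy.symm⟩
    omega
  have hdv : ∀ v, v ≠ x → v ≠ y → G'.degree v = G.degree v := by
    intro v h1 h2
    rw [← SimpleGraph.card_neighborFinset_eq_degree, ← SimpleGraph.card_neighborFinset_eq_degree,
      hnv v h1 h2]
  -- volumes
  have hvolA : vol G' A + 1 = vol G A := by
    rw [vol, vol, ← Finset.add_sum_erase A _ hx, ← Finset.add_sum_erase A _ hx]
    rw [Finset.sum_congr rfl (fun v hv => hdv v (Finset.ne_of_mem_erase hv)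
      (fun h => hyA (h ▸ Finset.mem_of_mem_erase hv)))]
    omega
  have hvolAc : vol G' Aᶜ + 1 = vol G Aᶜ := by
    rw [vol, vol, ← Finset.add_sum_erase Aᶜ _ hy, ← Finset.add_sum_erase Aᶜ _ hy]
    rw [Finset.sum_congr rfl (fun v hv => hdv v
      (fun h => hxAc (h ▸ Finset.mem_of_mem_erase hv)) (Finset.ne_of_mem_erase hv))]
    omega
  -- handshake
  have hhs : vol G A + vol G Aᶜ = 2 * numEdges G := by
    rw [vol, vol, Finset.sum_add_sum_compl, numEdges]
    exact SimpleGraph.sum_degrees_eq_twice_card_edges G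
  -- real casts
  have hmR : (2:ℝ) ≤ (numEdges G : ℝ) := by exact_mod_cast hm
  have hm0R : (0:ℝ) < (numEdges G : ℝ) := by linarith
  have cm : (numEdges G' : ℝ) = (numEdges G : ℝ) - 1 := by
    rw [← hm']; push_cast; ring
  have ca : (vol G' A : ℝ) = (vol G A : ℝ) - 1 := by
    rw [← hvolA]; push_cast; ring
  have cb : (vol G' Aᶜ : ℝ) = (vol G Aᶜ : ℝ) - 1 := by
    rw [← hvolAc]; push_cast; ring
  have heR : ((edgesIn G A : ℝ) + (edgesIn G Aᶜ : ℝ)) + 1 ≤ (numEdges G : ℝ) := by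
    exact_mod_cast hcount
  have habR : (vol G A : ℝ) + (vol G Aᶜ : ℝ) = 2 * (numEdges G : ℝ) := by
    exact_mod_cast hhs
  have hS : (vol G A : ℝ)^2 + (vol G Aᶜ : ℝ)^2
      ≤ 4 * ((edgesIn G A : ℝ) + (edgesIn G Aᶜ : ℝ)) * (numEdges G : ℝ) := by
    have h := hscore
    rw [bipScore, sub_nonneg, div_le_div_iff₀ (by positivity) (by positivity)] at h
    nlinarith [h]
  have key := stmt5_alg (numEdges G : ℝ) ((edgesIn G A : ℝ) + (edgesIn G Aᶜ : ℝ))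
    (vol G A : ℝ) (vol G Aᶜ : ℝ) hmR heR habR hS
  have hscore' : bipScore G' A =
      ((edgesIn G A : ℝ) + (edgesIn G Aᶜ : ℝ)) / ((numEdges G : ℝ) - 1)
        - (((vol G A : ℝ) - 1)^2 + ((vol G Aᶜ : ℝ) - 1)^2) / (4 * ((numEdges G : ℝ) - 1)^2) := by
    rw [bipScore, hInA, hInAc, cm, ca, cb]
  have hscoreG : bipScore G A =
      ((edgesIn G A : ℝ) + (edgesIn G Aᶜ : ℝ)) / (numEdges G : ℝ)
        - ((vol G A : ℝ)^2 + (vol G Aᶜ : ℝ)^2) / (4 * (numEdges G : ℝ)^2) := rfl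
  have hineq : 1 / (2 * (numEdges G : ℝ) * ((numEdges G : ℝ) - 1))
      ≤ bipScore G' A - bipScore G A := by
    rw [hscore', hscoreG]
    exact key
  refine ⟨?_, hineq⟩
  have hpos : (0:ℝ) < 1 / (2 * (numEdges G : ℝ) * ((numEdges G : ℝ) - 1)) := by
    apply div_pos one_pos
    have h1 : (0:ℝ) < (numEdges G : ℝ) - 1 := by linarith
    have h2 : (0:ℝ) < 2 * (numEdges G : ℝ) := by linarith
    exact mul_pos h2 h1
  linarith
end

section
/- For every n ≥ 2 and every n-vertex graph G with at least one edge, q*(G) ≤ 2·max(0, C(n,2) − n/2 − e(G)) / e(G), where C(n,2) = n(n−1)/2. -/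
open Finset
open scoped Classical

namespace ModularityAux

variable {V : Type*} [Fintype V]

/-- The subgraph of `G` with both endpoints inside `A`. -/
def sub (G : SimpleGraph V) (A : Finset V) : SimpleGraph V where
  Adj u v := G.Adj u v ∧ u ∈ A ∧ v ∈ A
  symm := ⟨fun u v h => ⟨h.1.symm, h.2.2, h.2.1⟩⟩
  loopless := ⟨fun v h => G.loopless.irrefl v h.1⟩

@[simp] lemma sub_adj (G : SimpleGraph V) (A : Finset V) (u v : V) :
    (sub G A).Adj u v ↔ G.Adj u v ∧ u ∈ A ∧ v ∈ A := Iff.rfl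

lemma sub_edgeFinset (G : SimpleGraph V) (A : Finset V) :
    (sub G A).edgeFinset = G.edgeFinset.filter (fun e => ∀ v ∈ e, v ∈ A) := by
  ext e
  refine Sym2.inductionOn e (fun x y => ?_)
  simp only [SimpleGraph.mem_edgeFinset, Finset.mem_filter, SimpleGraph.mem_edgeSet, sub_adj,
    Sym2.mem_iff]
  constructor
  · rintro ⟨h, hx, hy⟩
    exact ⟨h, fun v hv => by rcases hv with rfl | rfl <;> assumption⟩
  · rintro ⟨h, hall⟩
    exact ⟨h, hall x (Or.inl rfl), hall y (Or.inr rfl)⟩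

lemma sub_neighborFinset_of_mem (G : SimpleGraph V) {A : Finset V} {v : V} (hv : v ∈ A) :
    (sub G A).neighborFinset v = G.neighborFinset v ∩ A := by
  ext w
  simp only [SimpleGraph.mem_neighborFinset, sub_adj, Finset.mem_inter]
  tauto

lemma sub_degree_of_not_mem (G : SimpleGraph V) {A : Finset V} {v : V} (hv : v ∉ A) :
    (sub G A).degree v = 0 := by
  rw [← SimpleGraph.card_neighborFinset_eq_degree, Finset.card_eq_zero]
  ext w
  simp only [SimpleGraph.mem_neighborFinset, sub_adj, Finset.notMem_empty, iff_false]
  tauto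

lemma two_mul_edgesIn (G : SimpleGraph V) (A : Finset V) :
    2 * edgesIn G A = ∑ v ∈ A, (G.neighborFinset v ∩ A).card := by
  have h1 : edgesIn G A = (sub G A).edgeFinset.card := by
    rw [sub_edgeFinset, edgesIn]
  have h2 := (sub G A).sum_degrees_eq_twice_card_edges
  have h3 : ∑ v, (sub G A).degree v = ∑ v ∈ A, (sub G A).degree v :=
    (Finset.sum_subset (Finset.subset_univ A)
      (fun v _ hv => sub_degree_of_not_mem G hv)).symm
  calc 2 * edgesIn G A = ∑ v, (sub G A).degree v := by rw [h1, h2]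
    _ = ∑ v ∈ A, (sub G A).degree v := h3
    _ = ∑ v ∈ A, (G.neighborFinset v ∩ A).card := by
        refine Finset.sum_congr rfl fun v hv => ?_
        rw [← SimpleGraph.card_neighborFinset_eq_degree, sub_neighborFinset_of_mem G hv]

lemma sum_parts {M : Type*} [AddCommMonoid M] (P : Finpartition (univ : Finset V)) (f : V → M) :
    ∑ A ∈ P.parts, ∑ v ∈ A, f v = ∑ v, f v := by
  have h := P.supIndep.pairwiseDisjoint
  have h2 : ∑ v ∈ P.parts.biUnion id, f v = ∑ A ∈ P.parts, ∑ v ∈ id A, f v :=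
    Finset.sum_biUnion h
  rw [P.biUnion_parts] at h2
  exact h2.symm

lemma mem_part_comm (P : Finpartition (univ : Finset V)) (u v : V) :
    v ∈ P.part u ↔ u ∈ P.part v := by
  rw [P.mem_part_iff_part_eq_part (mem_univ v) (mem_univ u),
    P.mem_part_iff_part_eq_part (mem_univ u) (mem_univ v)]
  exact eq_comm

lemma card_part_add_le (P : Finpartition (univ : Finset V)) {u v : V}
    (hv : v ∉ P.part u) : (P.part u).card + (P.part v).card ≤ Fintype.card V := by
  have hne : P.part u ≠ P.part v := fun h => hv (h ▸ P.mem_part (mem_univ v))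
  have hd : Disjoint (P.part u) (P.part v) :=
    P.supIndep.pairwiseDisjoint (P.part_mem.mpr (mem_univ u)) (P.part_mem.mpr (mem_univ v)) hne
  calc (P.part u).card + (P.part v).card = (P.part u ∪ P.part v).card :=
        (card_union_of_disjoint hd).symm
    _ ≤ (univ : Finset V).card := card_le_card (subset_univ _)
    _ = Fintype.card V := card_univ

variable (G : SimpleGraph V) (P : Finpartition (univ : Finset V))

/-- in-part degree -/
noncomputable def dIn (v : V) : ℕ := (G.neighborFinset v ∩ P.part v).card

/-- out-of-part degree -/
noncomputable def cOut (v : V) : ℕ := (G.neighborFinset v \ P.part v).card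

/-- out-of-part non-neighbours -/
noncomputable def nOut (v : V) : ℕ :=
  (univ.filter fun w => w ∉ P.part v ∧ ¬ G.Adj v w).card

lemma dIn_add_cOut (v : V) : dIn G P v + cOut G P v = G.degree v := by
  rw [dIn, cOut, ← SimpleGraph.card_neighborFinset_eq_degree]
  exact card_inter_add_card_sdiff _ _

lemma part_add_cOut_add_nOut (v : V) :
    (P.part v).card + cOut G P v + nOut G P v = Fintype.card V := by
  have h1 : ((univ : Finset V).filter (fun w => w ∈ P.part v)).card
      + ((univ : Finset V).filter (fun w => ¬ w ∈ P.part v)).card = Fintype.card V := by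
    rw [card_filter_add_card_filter_not, card_univ]
  have h2 : (univ : Finset V).filter (fun w => w ∈ P.part v) = P.part v := by
    ext w; simp
  have h3 : (((univ : Finset V).filter (fun w => ¬ w ∈ P.part v)).filter
        (fun w => G.Adj v w)).card
      + (((univ : Finset V).filter (fun w => ¬ w ∈ P.part v)).filter
        (fun w => ¬ G.Adj v w)).card
      = ((univ : Finset V).filter (fun w => ¬ w ∈ P.part v)).card :=
    card_filter_add_card_filter_not _
  have h4 : ((univ : Finset V).filter (fun w => ¬ w ∈ P.part v)).filter
      (fun w => G.Adj v w) = G.neighborFinset v \ P.part v := by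
    rw [filter_filter]
    ext w
    simp only [mem_filter, mem_univ, true_and, mem_sdiff, SimpleGraph.mem_neighborFinset]
    tauto
  have h5 : ((univ : Finset V).filter (fun w => ¬ w ∈ P.part v)).filter
      (fun w => ¬ G.Adj v w)
      = univ.filter (fun w => ¬ w ∈ P.part v ∧ ¬ G.Adj v w) := by
    rw [filter_filter]
  rw [h2] at h1
  rw [h4, h5] at h3
  rw [cOut, nOut]
  omega

lemma dIn_lt_card_part (v : V) : dIn G P v + 1 ≤ (P.part v).card := by
  have hsub : G.neighborFinset v ∩ P.part v ⊂ P.part v := by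
    refine Finset.ssubset_iff_of_subset (inter_subset_right) |>.mpr ?_
    exact ⟨v, P.mem_part (mem_univ v), fun hc =>
      (G.notMem_neighborFinset_self v) (mem_inter.mp hc).1⟩
  have := Finset.card_lt_card hsub
  rw [dIn]; omega

lemma sum_dIn : ∑ v, dIn G P v = 2 * ∑ A ∈ P.parts, edgesIn G A := by
  rw [Finset.mul_sum]
  have h1 : ∀ A ∈ P.parts, 2 * edgesIn G A = ∑ v ∈ A, dIn G P v := by
    intro A hA
    rw [two_mul_edgesIn]
    refine Finset.sum_congr rfl fun v hv => ?_
    rw [dIn, P.part_eq_of_mem hA hv]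
  rw [Finset.sum_congr rfl h1, sum_parts]

lemma sum_card_part : ∑ v, (P.part v).card = ∑ A ∈ P.parts, A.card ^ 2 := by
  have h1 : ∀ A ∈ P.parts, (A.card : ℕ) ^ 2 = ∑ v ∈ A, (P.part v).card := by
    intro A hA
    have : ∀ v ∈ A, (P.part v).card = A.card := fun v hv => by
      rw [P.part_eq_of_mem hA hv]
    rw [Finset.sum_congr rfl this, Finset.sum_const, smul_eq_mul, sq]
  rw [Finset.sum_congr rfl h1, sum_parts]

lemma sum_vol_weighted :
    ∑ A ∈ P.parts, (A.card : ℝ) * (vol G A : ℝ)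
      = ∑ v, ((P.part v).card : ℝ) * (G.degree v : ℝ) := by
  have h1 : ∀ A ∈ P.parts, (A.card : ℝ) * (vol G A : ℝ)
      = ∑ v ∈ A, ((P.part v).card : ℝ) * (G.degree v : ℝ) := by
    intro A hA
    have hv : (vol G A : ℝ) = ∑ v ∈ A, (G.degree v : ℝ) := by
      rw [vol]; push_cast; rfl
    rw [hv, Finset.mul_sum]
    refine Finset.sum_congr rfl fun v hv => ?_
    rw [P.part_eq_of_mem hA hv]
  rw [Finset.sum_congr rfl h1, sum_parts]

lemma sum_nOut_sym :
    2 * ∑ v, (P.part v).card * nOut G P v ≤ Fintype.card V * ∑ v, nOut G P v := by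
  have hsym : ∀ u v : V, ((¬ v ∈ P.part u) ∧ ¬ G.Adj u v)
      ↔ ((¬ u ∈ P.part v) ∧ ¬ G.Adj v u) := by
    intro u v
    rw [mem_part_comm P u v, G.adj_comm]
  have hswap : ∑ u, ∑ v ∈ univ.filter (fun w => ¬ w ∈ P.part u ∧ ¬ G.Adj u w),
        (P.part u).card
      = ∑ u, ∑ v ∈ univ.filter (fun w => ¬ w ∈ P.part u ∧ ¬ G.Adj u w),
        (P.part v).card := by
    refine Finset.sum_comm' ?_
    intro x y
    simp only [mem_univ, true_and, and_true, mem_filter]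
    exact hsym x y
  have h1 : ∑ v, (P.part v).card * nOut G P v
      = ∑ u, ∑ v ∈ univ.filter (fun w => ¬ w ∈ P.part u ∧ ¬ G.Adj u w),
        (P.part u).card := by
    refine Finset.sum_congr rfl fun v _ => ?_
    rw [Finset.sum_const, smul_eq_mul, nOut, mul_comm]
  have h2 : 2 * ∑ v, (P.part v).card * nOut G P v
      = ∑ u, ∑ v ∈ univ.filter (fun w => ¬ w ∈ P.part u ∧ ¬ G.Adj u w),
        ((P.part u).card + (P.part v).card) := by
    calc 2 * ∑ v, (P.part v).card * nOut G P v
        = (∑ v, (P.part v).card * nOut G P v) + (∑ v, (P.part v).card * nOut G P v) :=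
          two_mul _
      _ = (∑ u, ∑ v ∈ univ.filter (fun w => ¬ w ∈ P.part u ∧ ¬ G.Adj u w), (P.part u).card)
          + (∑ u, ∑ v ∈ univ.filter (fun w => ¬ w ∈ P.part u ∧ ¬ G.Adj u w), (P.part v).card) :=
          congrArg₂ (· + ·) h1 (h1.trans hswap)
      _ = ∑ u, ∑ v ∈ univ.filter (fun w => ¬ w ∈ P.part u ∧ ¬ G.Adj u w),
          ((P.part u).card + (P.part v).card) := by
          rw [← Finset.sum_add_distrib]
          exact Finset.sum_congr rfl fun u _ => (Finset.sum_add_distrib).symm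
  rw [h2]
  calc ∑ u, ∑ v ∈ univ.filter (fun w => ¬ w ∈ P.part u ∧ ¬ G.Adj u w),
        ((P.part u).card + (P.part v).card)
      ≤ ∑ u, ∑ v ∈ univ.filter (fun w => ¬ w ∈ P.part u ∧ ¬ G.Adj u w),
        Fintype.card V := by
        refine Finset.sum_le_sum fun u _ => Finset.sum_le_sum fun v hv => ?_
        exact card_part_add_le P (Finset.mem_filter.mp hv).2.1
    _ = Fintype.card V * ∑ v, nOut G P v := by
        rw [Finset.mul_sum]
        refine Finset.sum_congr rfl fun u _ => ?_
        rw [Finset.sum_const, smul_eq_mul, nOut, mul_comm]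

/-- purely arithmetic endgame -/
lemma arith_endgame (rn rm E Q S V2 : ℝ) (hrn2 : 2 ≤ rn) (hrm1 : 1 ≤ rm)
    (hQn : rn ≤ Q) (hQn2 : Q ≤ rn ^ 2)
    (hCauchy : 4 * rm * rn * S ≤ rn ^ 2 * V2 + 4 * rm ^ 2 * Q)
    (hKey : 2 * rn * E + (rn - 2) * Q + 2 * rn ^ 2 + 2 * rm * rn ≤ 2 * S + rn ^ 3) :
    E / rm - V2 / (4 * rm ^ 2) ≤ max 0 (rn * (rn - 2) - 2 * rm) / rm := by
  have hrmpos : (0 : ℝ) < rm := by linarith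
  have hrnpos : (0 : ℝ) < rn := by linarith
  have hK2 : 2 * rm * rn * (2 * rn * E + (rn - 2) * Q + 2 * rn ^ 2 + 2 * rm * rn)
      ≤ 2 * rm * rn * (2 * S + rn ^ 3) :=
    mul_le_mul_of_nonneg_left hKey (by positivity)
  have hMaster : rn ^ 2 * (4 * rm * E - V2)
      ≤ 2 * rm * (rn ^ 2 - Q) * (rn * (rn - 2) - 2 * rm) := by nlinarith [hK2, hCauchy]
  have hC : 4 * rm * E - V2 ≤ 4 * rm * max 0 (rn * (rn - 2) - 2 * rm) := by
    rcases le_total (rn * (rn - 2) - 2 * rm) 0 with h | h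
    · rw [max_eq_left h, mul_zero]
      have h1 : 2 * rm * (rn ^ 2 - Q) * (rn * (rn - 2) - 2 * rm) ≤ 0 :=
        mul_nonpos_of_nonneg_of_nonpos (by nlinarith [hQn2]) h
      nlinarith [hMaster, h1, sq_nonneg rn]
    · rw [max_eq_right h]
      have hq0 : (0 : ℝ) ≤ Q := by linarith
      have h2rm : (0 : ℝ) ≤ 2 * rm := by linarith
      have t1 : (0 : ℝ) ≤ 2 * rm * (rn * (rn - 2) - 2 * rm) * Q :=
        mul_nonneg (mul_nonneg h2rm h) hq0
      have t2 : (0 : ℝ) ≤ 2 * rm * (rn * (rn - 2) - 2 * rm) * rn ^ 2 :=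
        mul_nonneg (mul_nonneg h2rm h) (sq_nonneg rn)
      have h2 : rn ^ 2 * (4 * rm * E - V2)
          ≤ rn ^ 2 * (4 * rm * (rn * (rn - 2) - 2 * rm)) := by nlinarith [hMaster, t1, t2]
      exact le_of_mul_le_mul_left h2 (by positivity)
  have heq : E / rm - V2 / (4 * rm ^ 2) = (4 * rm * E - V2) / (4 * rm ^ 2) := by
    field_simp
  have heq2 : max 0 (rn * (rn - 2) - 2 * rm) / rm
      = (4 * rm * max 0 (rn * (rn - 2) - 2 * rm)) / (4 * rm ^ 2) := by
    field_simp
  rw [heq, heq2]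
  have h4 : (0 : ℝ) < 4 * rm ^ 2 := by positivity
  exact div_le_div_of_nonneg_right hC h4.le

lemma cast_sum_sq (P : Finpartition (univ : Finset V)) :
    ∑ A ∈ P.parts, ((A.card : ℝ)) ^ 2 = ((∑ A ∈ P.parts, A.card ^ 2 : ℕ) : ℝ) := by
  push_cast
  rfl

lemma cauchy_ineq (G : SimpleGraph V) (P : Finpartition (univ : Finset V)) :
    4 * (numEdges G : ℝ) * (Fintype.card V : ℝ)
        * (∑ v, ((P.part v).card : ℝ) * (G.degree v : ℝ))
      ≤ (Fintype.card V : ℝ) ^ 2 * (∑ A ∈ P.parts, (vol G A : ℝ) ^ 2)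
        + 4 * (numEdges G : ℝ) ^ 2 * ((∑ A ∈ P.parts, A.card ^ 2 : ℕ) : ℝ) := by
  have h0 : (0 : ℝ) ≤ ∑ A ∈ P.parts,
      ((Fintype.card V : ℝ) * (vol G A : ℝ) - 2 * (numEdges G : ℝ) * (A.card : ℝ)) ^ 2 :=
    Finset.sum_nonneg fun A _ => sq_nonneg _
  have hsum : ∑ A ∈ P.parts,
      ((Fintype.card V : ℝ) * (vol G A : ℝ) - 2 * (numEdges G : ℝ) * (A.card : ℝ)) ^ 2
      = (Fintype.card V : ℝ) ^ 2 * (∑ A ∈ P.parts, (vol G A : ℝ) ^ 2)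
        + 4 * (numEdges G : ℝ) ^ 2 * (∑ A ∈ P.parts, ((A.card : ℝ)) ^ 2)
        - 4 * (numEdges G : ℝ) * (Fintype.card V : ℝ)
          * (∑ A ∈ P.parts, (A.card : ℝ) * (vol G A : ℝ)) := by
    rw [Finset.mul_sum, Finset.mul_sum, Finset.mul_sum, ← Finset.sum_add_distrib,
      ← Finset.sum_sub_distrib]
    exact Finset.sum_congr rfl fun A _ => by ring
  rw [hsum, cast_sum_sq, sum_vol_weighted] at h0
  linarith

lemma key_ineq (G : SimpleGraph V) (P : Finpartition (univ : Finset V)) :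
    2 * (Fintype.card V : ℝ) * ((∑ A ∈ P.parts, edgesIn G A : ℕ) : ℝ)
      + ((Fintype.card V : ℝ) - 2) * ((∑ A ∈ P.parts, A.card ^ 2 : ℕ) : ℝ)
      + 2 * (Fintype.card V : ℝ) ^ 2
      + 2 * (numEdges G : ℝ) * (Fintype.card V : ℝ)
    ≤ 2 * (∑ v, ((P.part v).card : ℝ) * (G.degree v : ℝ)) + (Fintype.card V : ℝ) ^ 3 := by
  classical
  have hdeg : ∑ v, (G.degree v : ℝ) = 2 * (numEdges G : ℝ) := by
    have h := congrArg (Nat.cast : ℕ → ℝ) (G.sum_degrees_eq_twice_card_edges)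
    push_cast at h
    rw [numEdges]
    push_cast
    exact h
  have hdInS : ∑ v, (dIn G P v : ℝ) = 2 * ((∑ A ∈ P.parts, edgesIn G A : ℕ) : ℝ) := by
    have h := congrArg (Nat.cast : ℕ → ℝ) (sum_dIn G P)
    push_cast at h ⊢
    exact h
  have hcp : ∑ v, ((P.part v).card : ℝ) = ((∑ A ∈ P.parts, A.card ^ 2 : ℕ) : ℝ) := by
    have h := congrArg (Nat.cast : ℕ → ℝ) (sum_card_part P)
    push_cast at h ⊢
    exact h
  have hcard1 : ∑ _v : V, (1 : ℝ) = (Fintype.card V : ℝ) := by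
    simp
  have hxnn : ∀ v : V, (0 : ℝ) ≤ ((P.part v).card : ℝ) - 1 - (dIn G P v : ℝ) := by
    intro v
    have h := dIn_lt_card_part G P v
    have h' : (dIn G P v : ℝ) + 1 ≤ ((P.part v).card : ℝ) := by exact_mod_cast h
    linarith
  have hple : ∀ v : V, ((P.part v).card : ℝ) ≤ (Fintype.card V : ℝ) := by
    intro v
    exact_mod_cast (by
      calc (P.part v).card ≤ (univ : Finset V).card := card_le_card (subset_univ _)
        _ = Fintype.card V := card_univ)
  have hA : ∑ v, ((P.part v).card : ℝ) * (((P.part v).card : ℝ) - 1 - (dIn G P v : ℝ))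
      ≤ ∑ v, (Fintype.card V : ℝ) * (((P.part v).card : ℝ) - 1 - (dIn G P v : ℝ)) :=
    Finset.sum_le_sum fun v _ => mul_le_mul_of_nonneg_right (hple v) (hxnn v)
  have hxsum : ∑ v, (((P.part v).card : ℝ) - 1 - (dIn G P v : ℝ))
      = ((∑ A ∈ P.parts, A.card ^ 2 : ℕ) : ℝ) - (Fintype.card V : ℝ)
        - 2 * ((∑ A ∈ P.parts, edgesIn G A : ℕ) : ℝ) := by
    rw [Finset.sum_sub_distrib, Finset.sum_sub_distrib, hcp, hcard1, hdInS]
  have hB : 2 * ∑ v, ((P.part v).card : ℝ) * (nOut G P v : ℝ)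
      ≤ (Fintype.card V : ℝ) * ∑ v, (nOut G P v : ℝ) := by
    have h := sum_nOut_sym G P
    have hc : ((2 * ∑ v, (P.part v).card * nOut G P v : ℕ) : ℝ)
        ≤ ((Fintype.card V * ∑ v, nOut G P v : ℕ) : ℝ) := by exact_mod_cast h
    push_cast at hc
    exact hc
  have hcOutS : ∑ v, (cOut G P v : ℝ)
      = 2 * (numEdges G : ℝ) - 2 * ((∑ A ∈ P.parts, edgesIn G A : ℕ) : ℝ) := by
    have h1 : ∑ v, ((dIn G P v : ℝ) + (cOut G P v : ℝ)) = ∑ v, (G.degree v : ℝ) := by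
      refine Finset.sum_congr rfl fun v _ => ?_
      exact_mod_cast congrArg (Nat.cast : ℕ → ℝ) (dIn_add_cOut G P v)
    rw [Finset.sum_add_distrib, hdInS, hdeg] at h1
    linarith
  have hnOutS : ∑ v, (nOut G P v : ℝ)
      = (Fintype.card V : ℝ) ^ 2 - ((∑ A ∈ P.parts, A.card ^ 2 : ℕ) : ℝ)
        - 2 * (numEdges G : ℝ) + 2 * ((∑ A ∈ P.parts, edgesIn G A : ℕ) : ℝ) := by
    have h1 : ∑ v, (((P.part v).card : ℝ) + (cOut G P v : ℝ) + (nOut G P v : ℝ))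
        = ∑ _v : V, (Fintype.card V : ℝ) := by
      refine Finset.sum_congr rfl fun v _ => ?_
      exact_mod_cast congrArg (Nat.cast : ℕ → ℝ) (part_add_cOut_add_nOut G P v)
    have h2 : ∑ _v : V, (Fintype.card V : ℝ) = (Fintype.card V : ℝ) ^ 2 := by
      rw [Finset.sum_const, card_univ, nsmul_eq_mul, sq]
    rw [Finset.sum_add_distrib, Finset.sum_add_distrib, hcp, hcOutS, h2] at h1
    linarith
  have hptws : ∑ v, ((P.part v).card : ℝ) * ((Fintype.card V : ℝ) - 1 - (G.degree v : ℝ))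
      = ∑ v, ((P.part v).card : ℝ) * (((P.part v).card : ℝ) - 1 - (dIn G P v : ℝ))
        + ∑ v, ((P.part v).card : ℝ) * (nOut G P v : ℝ) := by
    rw [← Finset.sum_add_distrib]
    refine Finset.sum_congr rfl fun v _ => ?_
    have e1 : (dIn G P v : ℝ) + (cOut G P v : ℝ) = (G.degree v : ℝ) := by
      exact_mod_cast congrArg (Nat.cast : ℕ → ℝ) (dIn_add_cOut G P v)
    have e2 : ((P.part v).card : ℝ) + (cOut G P v : ℝ) + (nOut G P v : ℝ)
        = (Fintype.card V : ℝ) := by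
      exact_mod_cast congrArg (Nat.cast : ℕ → ℝ) (part_add_cOut_add_nOut G P v)
    have e3 : (Fintype.card V : ℝ) - 1 - (G.degree v : ℝ)
        = (((P.part v).card : ℝ) - 1 - (dIn G P v : ℝ)) + (nOut G P v : ℝ) := by
      linarith
    rw [e3]
    ring
  have hlhs : ∑ v, ((P.part v).card : ℝ) * ((Fintype.card V : ℝ) - 1 - (G.degree v : ℝ))
      = ((Fintype.card V : ℝ) - 1) * ((∑ A ∈ P.parts, A.card ^ 2 : ℕ) : ℝ)
        - ∑ v, ((P.part v).card : ℝ) * (G.degree v : ℝ) := by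
    have h1 : ∀ v ∈ (univ : Finset V),
        ((P.part v).card : ℝ) * ((Fintype.card V : ℝ) - 1 - (G.degree v : ℝ))
        = ((P.part v).card : ℝ) * ((Fintype.card V : ℝ) - 1)
          - ((P.part v).card : ℝ) * (G.degree v : ℝ) := fun v _ => by ring
    rw [Finset.sum_congr rfl h1, Finset.sum_sub_distrib, ← Finset.sum_mul, hcp, mul_comm]
  have hAx : ∑ v, ((P.part v).card : ℝ) * (((P.part v).card : ℝ) - 1 - (dIn G P v : ℝ))
      ≤ (Fintype.card V : ℝ) * (((∑ A ∈ P.parts, A.card ^ 2 : ℕ) : ℝ) - (Fintype.card V : ℝ)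
        - 2 * ((∑ A ∈ P.parts, edgesIn G A : ℕ) : ℝ)) := by
    calc ∑ v, ((P.part v).card : ℝ) * (((P.part v).card : ℝ) - 1 - (dIn G P v : ℝ))
        ≤ ∑ v, (Fintype.card V : ℝ) * (((P.part v).card : ℝ) - 1 - (dIn G P v : ℝ)) := hA
      _ = (Fintype.card V : ℝ) * (((∑ A ∈ P.parts, A.card ^ 2 : ℕ) : ℝ) - (Fintype.card V : ℝ)
          - 2 * ((∑ A ∈ P.parts, edgesIn G A : ℕ) : ℝ)) := by rw [← Finset.mul_sum, hxsum]
  have hBx : 2 * ∑ v, ((P.part v).card : ℝ) * (nOut G P v : ℝ)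
      ≤ (Fintype.card V : ℝ) * ((Fintype.card V : ℝ) ^ 2
        - ((∑ A ∈ P.parts, A.card ^ 2 : ℕ) : ℝ)
        - 2 * (numEdges G : ℝ) + 2 * ((∑ A ∈ P.parts, edgesIn G A : ℕ) : ℝ)) := by
    calc 2 * ∑ v, ((P.part v).card : ℝ) * (nOut G P v : ℝ)
        ≤ (Fintype.card V : ℝ) * ∑ v, (nOut G P v : ℝ) := hB
      _ = _ := by rw [hnOutS]
  linarith [hptws, hlhs, hAx, hBx]

lemma Q_bounds (P : Finpartition (univ : Finset V)) (hV : Nonempty V) :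
    (Fintype.card V : ℝ) ≤ ((∑ A ∈ P.parts, A.card ^ 2 : ℕ) : ℝ)
      ∧ ((∑ A ∈ P.parts, A.card ^ 2 : ℕ) : ℝ) ≤ (Fintype.card V : ℝ) ^ 2 := by
  have hsum : ∑ A ∈ P.parts, A.card = Fintype.card V := by
    have h := P.sum_card_parts
    rw [card_univ] at h
    exact h
  constructor
  · have h2 : ∑ A ∈ P.parts, A.card ≤ ∑ A ∈ P.parts, A.card ^ 2 :=
      Finset.sum_le_sum fun A _ => Nat.le_self_pow two_ne_zero _
    rw [← hsum]
    exact_mod_cast h2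
  · have h2 : ∑ A ∈ P.parts, A.card ^ 2 ≤ ∑ A ∈ P.parts, A.card * Fintype.card V := by
      refine Finset.sum_le_sum fun A hA => ?_
      rw [sq]
      refine Nat.mul_le_mul_left _ ?_
      calc A.card ≤ (univ : Finset V).card := card_le_card (subset_univ _)
        _ = Fintype.card V := card_univ
    have h3 : ∑ A ∈ P.parts, A.card * Fintype.card V = Fintype.card V * Fintype.card V := by
      rw [← Finset.sum_mul, hsum]
    rw [sq]
    exact_mod_cast h2.trans_eq h3

end ModularityAux

open ModularityAux

theorem modScore_le_aux {V : Type*} [Fintype V] (hn : 2 ≤ Fintype.card V) (G : SimpleGraph V)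
    (hm : 1 ≤ numEdges G) (P : Finpartition (univ : Finset V)) :
    modScore G P ≤ max 0 ((Fintype.card V : ℝ) * ((Fintype.card V : ℝ) - 2)
      - 2 * (numEdges G : ℝ)) / (numEdges G : ℝ) := by
  classical
  haveI hV : Nonempty V := Fintype.card_pos_iff.mp (by omega)
  have hrn2 : (2 : ℝ) ≤ (Fintype.card V : ℝ) := by exact_mod_cast hn
  have hrm1 : (1 : ℝ) ≤ (numEdges G : ℝ) := by exact_mod_cast hm
  obtain ⟨hQ1, hQ2⟩ := Q_bounds P hV
  have h := arith_endgame (Fintype.card V : ℝ) (numEdges G : ℝ)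
    ((∑ A ∈ P.parts, edgesIn G A : ℕ) : ℝ)
    ((∑ A ∈ P.parts, A.card ^ 2 : ℕ) : ℝ)
    (∑ v, ((P.part v).card : ℝ) * (G.degree v : ℝ))
    (∑ A ∈ P.parts, (vol G A : ℝ) ^ 2)
    hrn2 hrm1 hQ1 hQ2 (cauchy_ineq G P) (key_ineq G P)
  have hms : modScore G P = ((∑ A ∈ P.parts, edgesIn G A : ℕ) : ℝ) / (numEdges G : ℝ)
      - (∑ A ∈ P.parts, (vol G A : ℝ) ^ 2) / (4 * (numEdges G : ℝ) ^ 2) := by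
    rw [modScore]
    push_cast
    rfl
  rw [hms]
  exact h

theorem stmt6 {V : Type*} [Fintype V] (hn : 2 ≤ Fintype.card V) (G : SimpleGraph V)
    (hm : 1 ≤ numEdges G) :
    modularity G ≤ 2 * max 0 ((Fintype.card V : ℝ) * ((Fintype.card V : ℝ) - 1) / 2
      - (Fintype.card V : ℝ) / 2 - (numEdges G : ℝ)) / (numEdges G : ℝ) := by
  haveI hne : Nonempty V := Fintype.card_pos_iff.mp (by omega)
  haveI hnp : Nonempty (Finpartition (univ : Finset V)) :=
    ⟨Finpartition.indiscrete (by
      simpa using (Finset.univ_nonempty (α := V)).ne_empty)⟩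
  rw [modularity]
  refine ciSup_le fun P => ?_
  have h := modScore_le_aux hn G hm P
  have heq : 2 * max 0 ((Fintype.card V : ℝ) * ((Fintype.card V : ℝ) - 1) / 2
      - (Fintype.card V : ℝ) / 2 - (numEdges G : ℝ))
      = max 0 ((Fintype.card V : ℝ) * ((Fintype.card V : ℝ) - 2) - 2 * (numEdges G : ℝ)) := by
    rw [mul_max_of_nonneg _ _ (by norm_num : (0:ℝ) ≤ 2), mul_zero]
    ring_nf
  rw [heq]
  exact h
end

section
/- If G = (V, E) is a graph, E₀ is a nonempty subset of E, and G' = (V, E ∖ E₀), then |q*(G) − q*(G')| < 2|E₀|/|E|. -/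
open Finset
open scoped Classical

section Aux
variable {V : Type*} [Fintype V]

lemma aux_sum_filter_le (s : Finset (Sym2 V)) (P : Finpartition (univ : Finset V)) :
    ∑ A ∈ P.parts, (s.filter (fun e => ∀ v ∈ e, v ∈ A)).card ≤ s.card := by
  classical
  have hdisj : (P.parts : Set (Finset V)).PairwiseDisjoint
      (fun A => s.filter (fun e => ∀ v ∈ e, v ∈ A)) := by
    intro A hA B hB hAB
    simp only [Function.onFun, Finset.disjoint_left]
    intro e heA heB
    rw [Finset.mem_filter] at heA heB
    induction e using Sym2.ind with
    | _ x y =>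
      have hxA : x ∈ A := heA.2 x (Sym2.mem_mk_left x y)
      have hxB : x ∈ B := heB.2 x (Sym2.mem_mk_left x y)
      exact Finset.disjoint_left.mp (P.disjoint hA hB hAB) hxA hxB
  rw [← Finset.card_biUnion hdisj]
  exact Finset.card_le_card (Finset.biUnion_subset.mpr fun A _ => Finset.filter_subset _ _)

lemma aux_vol_parts (G : SimpleGraph V) (P : Finpartition (univ : Finset V)) :
    ∑ A ∈ P.parts, vol G A = 2 * numEdges G := by
  classical
  have h1 : ∑ A ∈ P.parts, vol G A = ∑ v ∈ P.parts.biUnion id, G.degree v :=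
    (Finset.sum_biUnion P.disjoint).symm
  rw [h1, P.biUnion_parts]
  exact G.sum_degrees_eq_twice_card_edges

lemma aux_vol_le (G : SimpleGraph V) (U : Finset V) : vol G U ≤ 2 * numEdges G := by
  calc vol G U ≤ ∑ v, G.degree v :=
        Finset.sum_le_sum_of_subset (Finset.subset_univ U)
    _ = 2 * numEdges G := G.sum_degrees_eq_twice_card_edges

lemma aux_edgesIn_sum_le (G : SimpleGraph V) (P : Finpartition (univ : Finset V)) :
    ∑ A ∈ P.parts, edgesIn G A ≤ numEdges G :=
  aux_sum_filter_le G.edgeFinset P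

end Aux

section Del
variable {V : Type*} [Fintype V] (G : SimpleGraph V) (E₀ : Finset (Sym2 V))

lemma aux_edgeFinset_del (hsub : ↑E₀ ⊆ G.edgeSet) :
    (G.deleteEdges ↑E₀).edgeFinset = G.edgeFinset \ E₀ := by
  classical
  ext e
  simp [SimpleGraph.edgeSet_deleteEdges]

lemma aux_E₀_subset (hsub : ↑E₀ ⊆ G.edgeSet) : E₀ ⊆ G.edgeFinset := by
  intro e he
  rw [SimpleGraph.mem_edgeFinset]
  exact hsub he

lemma aux_numEdges_del (hsub : ↑E₀ ⊆ G.edgeSet) :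
    numEdges G = numEdges (G.deleteEdges ↑E₀) + E₀.card := by
  unfold numEdges
  rw [← Finset.card_sdiff_add_card_eq_card (aux_E₀_subset G E₀ hsub), ← aux_edgeFinset_del G E₀ hsub]
  congr!

lemma aux_degree_del (v : V) : (G.deleteEdges ↑E₀).degree v ≤ G.degree v := by
  apply Finset.card_le_card
  intro w hw
  rw [SimpleGraph.mem_neighborFinset] at hw ⊢
  exact hw.1

lemma aux_vol_del (U : Finset V) : vol (G.deleteEdges ↑E₀) U ≤ vol G U :=
  Finset.sum_le_sum fun v _ => by
    refine le_trans (le_of_eq ?_) (aux_degree_del G E₀ v)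
    congr!

lemma aux_edgesIn_del (U : Finset V) : edgesIn (G.deleteEdges ↑E₀) U ≤ edgesIn G U := by
  apply Finset.card_le_card
  apply Finset.filter_subset_filter
  intro e he
  have he' : e ∈ (G.deleteEdges ↑E₀).edgeFinset := by convert he
  rw [SimpleGraph.mem_edgeFinset] at he' ⊢
  rw [SimpleGraph.edgeSet_deleteEdges] at he'
  exact he'.1

lemma aux_edgesIn_split (hsub : ↑E₀ ⊆ G.edgeSet) (P : Finpartition (univ : Finset V)) :
    ∑ A ∈ P.parts, edgesIn G A ≤ (∑ A ∈ P.parts, edgesIn (G.deleteEdges ↑E₀) A) + E₀.card := by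
  have h1 : ∀ A : Finset V, edgesIn G A ≤ edgesIn (G.deleteEdges ↑E₀) A
      + (E₀.filter (fun e => ∀ v ∈ e, v ∈ A)).card := by
    intro A
    have hsub2 : G.edgeFinset.filter (fun e => ∀ v ∈ e, v ∈ A)
        ⊆ (G.deleteEdges ↑E₀).edgeFinset.filter (fun e => ∀ v ∈ e, v ∈ A)
          ∪ E₀.filter (fun e => ∀ v ∈ e, v ∈ A) := by
      intro e he
      rw [Finset.mem_filter] at he
      by_cases he0 : e ∈ E₀
      · exact Finset.mem_union_right _ (Finset.mem_filter.mpr ⟨he0, he.2⟩)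
      · refine Finset.mem_union_left _ (Finset.mem_filter.mpr ⟨?_, he.2⟩)
        rw [aux_edgeFinset_del G E₀ hsub, Finset.mem_sdiff]
        exact ⟨he.1, he0⟩
    calc edgesIn G A ≤ _ := Finset.card_le_card hsub2
      _ ≤ _ := Finset.card_union_le _ _
    unfold edgesIn
    exact le_of_eq (by congr!)
  calc ∑ A ∈ P.parts, edgesIn G A
      ≤ ∑ A ∈ P.parts, (edgesIn (G.deleteEdges ↑E₀) A
          + (E₀.filter (fun e => ∀ v ∈ e, v ∈ A)).card) :=
        Finset.sum_le_sum fun A _ => h1 A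
    _ = (∑ A ∈ P.parts, edgesIn (G.deleteEdges ↑E₀) A)
          + ∑ A ∈ P.parts, (E₀.filter (fun e => ∀ v ∈ e, v ∈ A)).card :=
        Finset.sum_add_distrib
    _ ≤ _ := by
        have := aux_sum_filter_le E₀ P
        omega

end Del

section Sup
variable {V : Type*} [Fintype V]

instance : Finite (Finpartition (univ : Finset V)) :=
  Finite.of_injective Finpartition.parts fun P Q h => Finpartition.ext h

lemma aux_le_modularity (G : SimpleGraph V) (P : Finpartition (univ : Finset V)) :
    modScore G P ≤ modularity G :=
  le_ciSup (Set.finite_range _).bddAbove P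

lemma aux_exists_max (G : SimpleGraph V) [Nonempty V] :
    ∃ P, modularity G = modScore G P ∧ ∀ Q, modScore G Q ≤ modScore G P := by
  have : Nonempty (Finpartition (univ : Finset V)) :=
    ⟨Finpartition.indiscrete (by simp [← Finset.nonempty_iff_ne_empty])⟩
  obtain ⟨P₀, h⟩ := Finite.exists_max (modScore G)
  exact ⟨P₀, le_antisymm (ciSup_le h) (aux_le_modularity G P₀), h⟩

lemma aux_modScore_indiscrete (G : SimpleGraph V) [Nonempty V] (hm : 1 ≤ numEdges G) :
    modScore G (Finpartition.indiscrete (by simp [← Finset.nonempty_iff_ne_empty] :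
      (univ : Finset V) ≠ ⊥)) = 0 := by
  have hm0 : ((numEdges G : ℝ)) ≠ 0 := by
    simp only [ne_eq, Nat.cast_eq_zero]; omega
  have h1 : edgesIn G (univ : Finset V) = numEdges G := by
    unfold edgesIn numEdges
    congr 1
    apply Finset.filter_true_of_mem
    intro e _ v _
    exact Finset.mem_univ v
  have h2 : vol G (univ : Finset V) = 2 * numEdges G :=
    G.sum_degrees_eq_twice_card_edges
  rw [modScore]
  simp only [Finpartition.indiscrete_parts, Finset.sum_singleton, h1, h2]
  push_cast
  field_simp
  ring

lemma aux_modularity_nonneg (G : SimpleGraph V) [Nonempty V] (hm : 1 ≤ numEdges G) :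
    0 ≤ modularity G := by
  rw [← aux_modScore_indiscrete G hm]
  exact aux_le_modularity G _

end Sup

lemma R1 (m' d E E' W W' M Pr Q : ℝ) (hm' : 1 ≤ m') (hd : 1 ≤ d)
    (hEE' : E' ≤ E) (hE'm' : E' ≤ m')
    (hW : W ≤ W' + 2 * Pr + Q) (hP : Pr ≤ 2 * d * M) (hQ : Q ≤ 4 * d ^ 2)
    (hM2 : M ^ 2 ≤ W') (hM0 : 0 ≤ M) (hMle : M ≤ 2 * m') :
    (E' / m' - W' / (4 * m' ^ 2)) - 2 * d / (m' + d)
      < E / (m' + d) - W / (4 * (m' + d) ^ 2) := by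
  have hm'0 : (0:ℝ) < m' := by linarith
  have hd0 : (0:ℝ) < d := by linarith
  have hm0 : (0:ℝ) < m' + d := by linarith
  have step1 : E' / (m' + d) - (W' + 4 * d * M + 4 * d ^ 2) / (4 * (m' + d) ^ 2)
      ≤ E / (m' + d) - W / (4 * (m' + d) ^ 2) := by
    have h1 : E' / (m' + d) ≤ E / (m' + d) := by gcongr
    have h2 : W / (4 * (m' + d) ^ 2) ≤ (W' + 4 * d * M + 4 * d ^ 2) / (4 * (m' + d) ^ 2) := by
      gcongr
      linarith
    linarith
  have key : (E' / (m' + d) - (W' + 4 * d * M + 4 * d ^ 2) / (4 * (m' + d) ^ 2))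
      - ((E' / m' - W' / (4 * m' ^ 2)) - 2 * d / (m' + d))
      = (-(4 * d * (m' + d) * m' * E') + W' * ((m' + d) ^ 2 - m' ^ 2) - 4 * d * M * m' ^ 2
          - 4 * d ^ 2 * m' ^ 2 + 8 * d * (m' + d) * m' ^ 2) / (4 * (m' + d) ^ 2 * m' ^ 2) := by
    field_simp
    ring
  have hN : 0 < -(4 * d * (m' + d) * m' * E') + W' * ((m' + d) ^ 2 - m' ^ 2) - 4 * d * M * m' ^ 2
          - 4 * d ^ 2 * m' ^ 2 + 8 * d * (m' + d) * m' ^ 2 := by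
    have h1 : 4 * d * (m' + d) * m' * E' ≤ 4 * d * (m' + d) * m' * m' := by
      have h : (0:ℝ) < 4 * d * (m' + d) * m' := by positivity
      nlinarith
    have h2 : M ^ 2 * ((m' + d) ^ 2 - m' ^ 2) ≤ W' * ((m' + d) ^ 2 - m' ^ 2) := by
      have h : (0:ℝ) ≤ (m' + d) ^ 2 - m' ^ 2 := by nlinarith
      nlinarith
    nlinarith [mul_pos (mul_pos hd0 hm'0) hm'0,
      mul_nonneg (mul_nonneg hd0.le hd0.le) (sq_nonneg M),
      mul_nonneg (mul_nonneg hd0.le hm'0.le) (sq_nonneg (M - m'))]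
  have h3 : (E' / m' - W' / (4 * m' ^ 2)) - 2 * d / (m' + d)
      < E' / (m' + d) - (W' + 4 * d * M + 4 * d ^ 2) / (4 * (m' + d) ^ 2) := by
    have h4 := div_pos hN (show (0:ℝ) < 4 * (m' + d) ^ 2 * m' ^ 2 by positivity)
    linarith [key ▸ h4]
  linarith

lemma R2 (m' d E E' W W' : ℝ) (hm' : 1 ≤ m') (hd : 1 ≤ d)
    (hE0 : 0 ≤ E) (hEm : E ≤ m' + d) (hEE' : E ≤ E' + d)
    (hW0 : 0 ≤ W') (hWW : W' ≤ W) :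
    E / (m' + d) - W / (4 * (m' + d) ^ 2)
      < 2 * d / (m' + d) + max (E' / m' - W' / (4 * m' ^ 2)) 0 := by
  have hm'0 : (0:ℝ) < m' := by linarith
  have hd0 : (0:ℝ) < d := by linarith
  have hm0 : (0:ℝ) < m' + d := by linarith
  by_cases hq : E / (m' + d) - W / (4 * (m' + d) ^ 2)
      - (E' / m' - W' / (4 * m' ^ 2)) < 2 * d / (m' + d)
  · have := le_max_left (E' / m' - W' / (4 * m' ^ 2)) (0:ℝ)
    linarith
  · push_neg at hq
    -- edge part bound
    have e1 : E / (m' + d) - E' / m' ≤ d * ((m' + d) - E) / ((m' + d) * m') := by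
      rw [div_sub_div _ _ hm0.ne' hm'0.ne']
      have h : E * m' - E' * (m' + d) ≤ d * ((m' + d) - E) := by nlinarith
      gcongr
      linarith [h]
    -- tax part bound
    have e2 : W' / (4 * m' ^ 2) - W / (4 * (m' + d) ^ 2)
        ≤ W * ((m' + d) ^ 2 - m' ^ 2) / (4 * (m' + d) ^ 2 * m' ^ 2) := by
      have h1 : W' / (4 * m' ^ 2) ≤ W / (4 * m' ^ 2) := by gcongr
      have h2 : W / (4 * m' ^ 2) - W / (4 * (m' + d) ^ 2)
          = W * ((m' + d) ^ 2 - m' ^ 2) / (4 * (m' + d) ^ 2 * m' ^ 2) := by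
        field_simp
      linarith
    have ecomb : d * ((m' + d) - E) / ((m' + d) * m')
          + W * ((m' + d) ^ 2 - m' ^ 2) / (4 * (m' + d) ^ 2 * m' ^ 2)
        = (4 * d * (m' + d) * m' * ((m' + d) - E) + W * ((m' + d) ^ 2 - m' ^ 2))
            / (4 * (m' + d) ^ 2 * m' ^ 2) := by
      field_simp
    have h2 : 2 * d / (m' + d)
        ≤ (4 * d * (m' + d) * m' * ((m' + d) - E) + W * ((m' + d) ^ 2 - m' ^ 2))
            / (4 * (m' + d) ^ 2 * m' ^ 2) := by
      rw [← ecomb]; linarith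
    have h3 : 2 * d * (4 * (m' + d) ^ 2 * m' ^ 2)
        ≤ (4 * d * (m' + d) * m' * ((m' + d) - E) + W * ((m' + d) ^ 2 - m' ^ 2)) * (m' + d) :=
      (div_le_div_iff₀ hm0 (by positivity)).mp h2
    have hW0' : (0:ℝ) ≤ W := hW0.trans hWW
    have goal2 : E / (m' + d) - W / (4 * (m' + d) ^ 2) < 2 * d / (m' + d) := by
      have hnum : 4 * (m' + d) * E - W < 8 * d * (m' + d) := by
        by_contra hcon
        push_neg at hcon
        have t1 := mul_le_mul_of_nonneg_right hcon
          (show (0:ℝ) ≤ (m' + d) * ((m' + d) ^ 2 - m' ^ 2) by nlinarith [mul_pos hm0 (mul_pos hd0 hm0), mul_pos hm0 (mul_pos hd0 hm'0)])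
        have q1 : (0:ℝ) ≤ d * (m' + d) ^ 3 * ((m' + d) - E) :=
          mul_nonneg (by positivity) (by linarith)
        have q2 : (0:ℝ) < d ^ 2 * (m' + d) ^ 3 := by positivity
        nlinarith [h3, t1, q1, q2]
      have heq1 : E / (m' + d) - W / (4 * (m' + d) ^ 2)
          = (4 * (m' + d) * E - W) / (4 * (m' + d) ^ 2) := by field_simp
      have heq2 : 2 * d / (m' + d) = 8 * d * (m' + d) / (4 * (m' + d) ^ 2) := by
        field_simp; ring
      rw [heq1, heq2]
      exact (div_lt_div_iff_of_pos_right (show (0:ℝ) < 4 * (m' + d) ^ 2 by positivity)).mpr hnum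
    have := le_max_right (E' / m' - W' / (4 * m' ^ 2)) (0:ℝ)
    linarith

section Dir
variable {V : Type*} [Fintype V] (G : SimpleGraph V) (E₀ : Finset (Sym2 V))

lemma aux_dir2 (hsub : ↑E₀ ⊆ G.edgeSet) (hd1 : 1 ≤ E₀.card)
    (hm'1 : 1 ≤ numEdges (G.deleteEdges ↑E₀)) (P : Finpartition (univ : Finset V)) :
    modScore G P < 2 * (E₀.card : ℝ) / (numEdges G : ℝ)
      + max (modScore (G.deleteEdges ↑E₀) P) 0 := by
  set H := G.deleteEdges ↑E₀ with hH
  set m' : ℝ := (numEdges H : ℝ) with hm'def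
  set d : ℝ := (E₀.card : ℝ) with hddef
  set E : ℝ := ∑ A ∈ P.parts, (edgesIn G A : ℝ) with hEdef
  set E' : ℝ := ∑ A ∈ P.parts, (edgesIn H A : ℝ) with hE'def
  set W : ℝ := ∑ A ∈ P.parts, (vol G A : ℝ) ^ 2 with hWdef
  set W' : ℝ := ∑ A ∈ P.parts, (vol H A : ℝ) ^ 2 with hW'def
  have hmr : (numEdges G : ℝ) = m' + d := by
    rw [hm'def, hddef]
    exact_mod_cast congrArg (Nat.cast : ℕ → ℝ) (aux_numEdges_del G E₀ hsub)
  have hG : modScore G P = E / (m' + d) - W / (4 * (m' + d) ^ 2) := by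
    rw [modScore, hmr]
  have hHs : modScore H P = E' / m' - W' / (4 * m' ^ 2) := rfl
  rw [hG, hHs, hmr]
  apply R2
  · rw [hm'def]; exact_mod_cast hm'1
  · rw [hddef]; exact_mod_cast hd1
  · exact Finset.sum_nonneg fun A _ => Nat.cast_nonneg _
  · rw [← hmr, hEdef]
    push_cast
    exact_mod_cast aux_edgesIn_sum_le G P
  · rw [hEdef, hE'def, hddef]
    push_cast
    exact_mod_cast aux_edgesIn_split G E₀ hsub P
  · exact Finset.sum_nonneg fun A _ => sq_nonneg _
  · apply Finset.sum_le_sum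
    intro A _
    have := aux_vol_del G E₀ A
    gcongr

lemma aux_dir1 [Nonempty V] (hsub : ↑E₀ ⊆ G.edgeSet) (hd1 : 1 ≤ E₀.card)
    (hm'1 : 1 ≤ numEdges (G.deleteEdges ↑E₀)) (P : Finpartition (univ : Finset V)) :
    modScore (G.deleteEdges ↑E₀) P - 2 * (E₀.card : ℝ) / (numEdges G : ℝ) < modScore G P := by
  set H := G.deleteEdges ↑E₀ with hH
  set m' : ℝ := (numEdges H : ℝ) with hm'def
  set d : ℝ := (E₀.card : ℝ) with hddef
  set E : ℝ := ∑ A ∈ P.parts, (edgesIn G A : ℝ) with hEdef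
  set E' : ℝ := ∑ A ∈ P.parts, (edgesIn H A : ℝ) with hE'def
  set W : ℝ := ∑ A ∈ P.parts, (vol G A : ℝ) ^ 2 with hWdef
  set W' : ℝ := ∑ A ∈ P.parts, (vol H A : ℝ) ^ 2 with hW'def
  set M : ℝ := ((P.parts.sup (fun A => vol H A) : ℕ) : ℝ) with hMdef
  set Pr : ℝ := ∑ A ∈ P.parts, (vol H A : ℝ) * ((vol G A : ℝ) - (vol H A : ℝ)) with hPrdef
  set Q : ℝ := ∑ A ∈ P.parts, ((vol G A : ℝ) - (vol H A : ℝ)) ^ 2 with hQdef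
  have hmr : (numEdges G : ℝ) = m' + d := by
    rw [hm'def, hddef]
    exact_mod_cast congrArg (Nat.cast : ℕ → ℝ) (aux_numEdges_del G E₀ hsub)
  have hG : modScore G P = E / (m' + d) - W / (4 * (m' + d) ^ 2) := by
    rw [modScore, hmr]
  have hHs : modScore H P = E' / m' - W' / (4 * m' ^ 2) := rfl
  have hparts : P.parts.Nonempty :=
    P.parts_nonempty (by simpa using (Finset.univ_nonempty (α := V)).ne_empty)
  have hdel : ∀ A : Finset V, (0:ℝ) ≤ (vol G A : ℝ) - (vol H A : ℝ) := by
    intro A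
    have := aux_vol_del G E₀ A
    have h2 : ((vol H A : ℕ) : ℝ) ≤ ((vol G A : ℕ) : ℝ) := by exact_mod_cast this
    linarith
  have hsumdel : ∑ A ∈ P.parts, ((vol G A : ℝ) - (vol H A : ℝ)) = 2 * d := by
    rw [Finset.sum_sub_distrib]
    have h1 : ∑ A ∈ P.parts, (vol G A : ℝ) = 2 * (m' + d) := by
      rw [← hmr]
      exact_mod_cast congrArg (Nat.cast : ℕ → ℝ) (aux_vol_parts G P)
    have h2 : ∑ A ∈ P.parts, (vol H A : ℝ) = 2 * m' := by
      rw [hm'def]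
      exact_mod_cast congrArg (Nat.cast : ℕ → ℝ) (aux_vol_parts H P)
    rw [h1, h2]; ring
  rw [hG, hHs, hmr]
  apply R1 (W := W) (W' := W') (M := M) (Pr := Pr) (Q := Q)
  · rw [hm'def]; exact_mod_cast hm'1
  · rw [hddef]; exact_mod_cast hd1
  · apply Finset.sum_le_sum
    intro A _
    exact_mod_cast aux_edgesIn_del G E₀ A
  · rw [hE'def, hm'def]
    push_cast
    exact_mod_cast aux_edgesIn_sum_le H P

  · -- W ≤ W' + 2 Pr + Q  (in fact equality)
    have : ∀ A ∈ P.parts, (vol G A : ℝ) ^ 2 = (vol H A : ℝ) ^ 2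
        + 2 * ((vol H A : ℝ) * ((vol G A : ℝ) - (vol H A : ℝ)))
        + ((vol G A : ℝ) - (vol H A : ℝ)) ^ 2 := fun A _ => by ring
    rw [hWdef, Finset.sum_congr rfl this]
    rw [Finset.sum_add_distrib, Finset.sum_add_distrib, ← Finset.mul_sum]
  · -- Pr ≤ 2 d M
    have h1 : Pr ≤ ∑ A ∈ P.parts, M * ((vol G A : ℝ) - (vol H A : ℝ)) := by
      apply Finset.sum_le_sum
      intro A hA
      apply mul_le_mul_of_nonneg_right _ (hdel A)
      rw [hMdef]
      exact_mod_cast Finset.le_sup (f := fun A => vol H A) hA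
    rw [← Finset.mul_sum, hsumdel] at h1
    linarith
  · -- Q ≤ 4 d^2
    have h1 : ∀ A ∈ P.parts, ((vol G A : ℝ) - (vol H A : ℝ)) ^ 2
        ≤ 2 * d * ((vol G A : ℝ) - (vol H A : ℝ)) := by
      intro A hA
      have h2 : (vol G A : ℝ) - (vol H A : ℝ) ≤ 2 * d := by
        rw [← hsumdel]
        exact Finset.single_le_sum (fun B _ => hdel B) hA
      nlinarith [hdel A]
    calc Q ≤ ∑ A ∈ P.parts, 2 * d * ((vol G A : ℝ) - (vol H A : ℝ)) :=
          Finset.sum_le_sum h1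
      _ = 2 * d * (2 * d) := by rw [← Finset.mul_sum, hsumdel]
      _ = 4 * d ^ 2 := by ring
  · -- M ^ 2 ≤ W'
    obtain ⟨A₀, hA₀, hsup⟩ := Finset.exists_mem_eq_sup P.parts hparts (fun A => vol H A)
    have : M ^ 2 = (vol H A₀ : ℝ) ^ 2 := by rw [hMdef, hsup]
    rw [this, hW'def]
    exact Finset.single_le_sum (f := fun A => (vol H A : ℝ) ^ 2) (fun B _ => sq_nonneg _) hA₀
  · exact Nat.cast_nonneg _
  · -- M ≤ 2 m'
    rw [hMdef, hm'def]
    have : P.parts.sup (fun A => vol H A) ≤ 2 * numEdges H :=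
      Finset.sup_le fun A _ => aux_vol_le H A
    exact_mod_cast this

end Dir

theorem stmt7 {V : Type*} [Fintype V] (G : SimpleGraph V) (E₀ : Finset (Sym2 V))
    (hsub : ↑E₀ ⊆ G.edgeSet) (hne : E₀.Nonempty) :
    |modularity G - modularity (G.deleteEdges ↑E₀)|
      < 2 * (E₀.card : ℝ) / (numEdges G : ℝ) := by
  classical
  set H := G.deleteEdges ↑E₀ with hH
  have hd1 : 1 ≤ E₀.card := hne.card_pos
  have hmE : numEdges G = numEdges H + E₀.card := aux_numEdges_del G E₀ hsub
  have hm1 : 1 ≤ numEdges G := by omega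
  have hV : Nonempty V := by
    obtain ⟨e, _⟩ := hne
    induction e using Sym2.ind with
    | _ x y => exact ⟨x⟩
  have hmG0 : ((numEdges G : ℝ)) ≠ 0 := by
    simp only [ne_eq, Nat.cast_eq_zero]; omega
  by_cases hm' : numEdges H = 0
  · -- all edges deleted
    have hHmod : modularity H = 0 := by
      have h0 : ∀ P : Finpartition (univ : Finset V), modScore H P = 0 := by
        intro P
        rw [modScore, hm']
        norm_num
      rw [modularity]
      simp only [h0]
      exact ciSup_const
    have hdm : (E₀.card : ℝ) = (numEdges G : ℝ) := by
      have : E₀.card = numEdges G := by omega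
      exact_mod_cast this
    have h2 : 2 * (E₀.card : ℝ) / (numEdges G : ℝ) = 2 := by
      rw [hdm]; field_simp
    rw [hHmod, sub_zero, h2, abs_lt]
    constructor
    · have := aux_modularity_nonneg G hm1
      linarith
    · obtain ⟨P₀, hP₀, _⟩ := aux_exists_max G
      rw [hP₀, modScore]
      have hE : (∑ A ∈ P₀.parts, (edgesIn G A : ℝ)) / (numEdges G : ℝ) ≤ 1 := by
        rw [div_le_one (by positivity : (0:ℝ) < (numEdges G : ℝ))]
        · push_cast
          exact_mod_cast aux_edgesIn_sum_le G P₀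
      have hW : 0 ≤ (∑ A ∈ P₀.parts, (vol G A : ℝ) ^ 2) / (4 * (numEdges G : ℝ) ^ 2) := by
        positivity
      linarith
  · have hm'1 : 1 ≤ numEdges H := by omega
    rw [abs_sub_lt_iff]
    constructor
    · obtain ⟨P₀, hP₀, _⟩ := aux_exists_max G
      have h := aux_dir2 G E₀ hsub hd1 hm'1 P₀
      have hle : max (modScore H P₀) 0 ≤ modularity H :=
        max_le (aux_le_modularity H P₀) (aux_modularity_nonneg H hm'1)
      rw [hP₀]
      linarith
    · obtain ⟨P₁, hP₁, _⟩ := aux_exists_max H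
      have h := aux_dir1 G E₀ hsub hd1 hm'1 P₁
      rw [hP₁]
      linarith [aux_le_modularity G P₁]
end

section
/- Let G = K_{s,t} be the complete bipartite graph with parts S, T of sizes s, t ≥ 1, and let A = {A, V∖A} be any bipartition of V(G). Writing σ = |A ∩ S|/s and τ = |A ∩ T|/t, we have q_A(K_{s,t}) = −(1/2)(σ − τ)². In particular q*(K_{s,t}) has no positive bipartition score, and every bipartition with σ = τ scores exactly 0. -/
open Finset
open scoped Classical

section helpers
variable {s t : ℕ}

local notation "G" => completeBipartiteGraph (Fin s) (Fin t)

lemma deg_inl (i : Fin s) : (G).degree (Sum.inl i) = t := by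
  have : (G).neighborFinset (Sum.inl i) = univ.image Sum.inr := by
    ext v; cases v <;> simp [SimpleGraph.mem_neighborFinset]
  rw [← SimpleGraph.card_neighborFinset_eq_degree, this,
    Finset.card_image_of_injective _ Sum.inr_injective, card_univ, Fintype.card_fin]

lemma deg_inr (j : Fin t) : (G).degree (Sum.inr j) = s := by
  have : (G).neighborFinset (Sum.inr j) = univ.image Sum.inl := by
    ext v; cases v <;> simp [SimpleGraph.mem_neighborFinset]
  rw [← SimpleGraph.card_neighborFinset_eq_degree, this,
    Finset.card_image_of_injective _ Sum.inl_injective, card_univ, Fintype.card_fin]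

lemma f_inj : Function.Injective
    (fun p : Fin s × Fin t => s(Sum.inl p.1, Sum.inr p.2)) := by
  rintro ⟨a, b⟩ ⟨c, d⟩ h
  simp [Sym2.eq_iff] at h
  simp [Prod.ext_iff, h]

lemma edgeFinset_eq :
    (G).edgeFinset = (univ : Finset (Fin s × Fin t)).image
      (fun p => s(Sum.inl p.1, Sum.inr p.2)) := by
  ext e
  induction e using Sym2.ind with
  | _ x y =>
    cases x <;> cases y <;>
      simp [SimpleGraph.mem_edgeFinset, Sym2.eq_iff, eq_comm]

lemma numEdges_eq : numEdges G = s * t := by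
  rw [numEdges, edgeFinset_eq, Finset.card_image_of_injective _ f_inj, card_univ]
  simp [Fintype.card_prod]

lemma edgesIn_eq (A : Finset (Fin s ⊕ Fin t)) :
    edgesIn G A = (univ.filter fun i : Fin s => Sum.inl i ∈ A).card *
      (univ.filter fun j : Fin t => Sum.inr j ∈ A).card := by
  rw [edgesIn, edgeFinset_eq]
  simp only [Finset.filter_image]
  rw [Finset.card_image_of_injective _ f_inj, ← Finset.card_product,
    ← Finset.univ_product_univ]
  congr 1
  ext p
  simp

lemma vol_eq (A : Finset (Fin s ⊕ Fin t)) :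
    vol G A = (univ.filter fun i : Fin s => Sum.inl i ∈ A).card * t +
      (univ.filter fun j : Fin t => Sum.inr j ∈ A).card * s := by
  rw [vol]
  have hu : A = (A.filter (·.isLeft)) ∪ (A.filter (·.isRight)) := by
    rw [← Finset.filter_or, Finset.filter_true_of_mem]
    intro v _; cases v <;> simp
  rw [hu, Finset.sum_union (by
    rw [Finset.disjoint_filter]; intro v _ h; clear hu; cases v <;> simp_all)]
  have h1 : A.filter (·.isLeft) = (univ.filter fun i : Fin s => Sum.inl i ∈ A).image Sum.inl := by
    ext v; cases v <;> simp
  have h2 : A.filter (·.isRight) = (univ.filter fun j : Fin t => Sum.inr j ∈ A).image Sum.inr := by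
    ext v; cases v <;> simp
  rw [h1, h2, Finset.sum_image (by simp), Finset.sum_image (by simp)]
  simp [deg_inl, deg_inr, Finset.sum_const, mul_comm]

lemma cardL (A : Finset (Fin s ⊕ Fin t)) :
    (A.filter (fun v => v.isLeft)).card = (univ.filter fun i : Fin s => Sum.inl i ∈ A).card := by
  have h1 : A.filter (·.isLeft) = (univ.filter fun i : Fin s => Sum.inl i ∈ A).image Sum.inl := by
    ext v; cases v <;> simp
  rw [h1, Finset.card_image_of_injective _ Sum.inl_injective]

lemma cardR (A : Finset (Fin s ⊕ Fin t)) :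
    (A.filter (fun v => v.isRight)).card = (univ.filter fun j : Fin t => Sum.inr j ∈ A).card := by
  have h2 : A.filter (·.isRight) = (univ.filter fun j : Fin t => Sum.inr j ∈ A).image Sum.inr := by
    ext v; cases v <;> simp
  rw [h2, Finset.card_image_of_injective _ Sum.inr_injective]

lemma cardLc (A : Finset (Fin s ⊕ Fin t)) :
    (univ.filter fun i : Fin s => Sum.inl i ∉ A).card =
      s - (univ.filter fun i : Fin s => Sum.inl i ∈ A).card := by
  rw [Finset.filter_not, Finset.card_sdiff_of_subset (Finset.filter_subset _ _), card_univ,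
    Fintype.card_fin]

lemma cardRc (A : Finset (Fin s ⊕ Fin t)) :
    (univ.filter fun j : Fin t => Sum.inr j ∉ A).card =
      t - (univ.filter fun j : Fin t => Sum.inr j ∈ A).card := by
  rw [Finset.filter_not, Finset.card_sdiff_of_subset (Finset.filter_subset _ _), card_univ,
    Fintype.card_fin]
end helpers

theorem stmt8 (s t : ℕ) (hs : 1 ≤ s) (ht : 1 ≤ t) (A : Finset (Fin s ⊕ Fin t)) :
    bipScore (completeBipartiteGraph (Fin s) (Fin t)) A =
      -(1 / 2) * ((((A.filter (fun v => v.isLeft)).card : ℝ) / s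
        - ((A.filter (fun v => v.isRight)).card : ℝ) / t)) ^ 2 := by
  have haS : (univ.filter fun i : Fin s => Sum.inl i ∈ A).card ≤ s :=
    (Finset.card_filter_le _ _).trans (by simp)
  have hbT : (univ.filter fun j : Fin t => Sum.inr j ∈ A).card ≤ t :=
    (Finset.card_filter_le _ _).trans (by simp)
  rw [bipScore, numEdges_eq, edgesIn_eq, edgesIn_eq, vol_eq, vol_eq, cardL, cardR]
  simp only [Finset.mem_compl]
  simp only [cardLc, cardRc]
  have hs' : (s : ℝ) ≠ 0 := by positivity
  have ht' : (t : ℝ) ≠ 0 := by positivity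
  push_cast [Nat.cast_sub haS, Nat.cast_sub hbT]
  field_simp
  ring
end

section
/- Let G be a graph with bipartition A = {A, V∖A} such that e_G(A, V∖A) ≥ 1, and let G⁻ be obtained from G by removing one edge between A and V∖A. Then e(G⁻)²·q_A(G⁻) = e(G)²·q_A(G) − e(G)·q^E_A(G) + e(G) − 1/2, where q^E_A(G) = (e_G(A)+e_G(V∖A))/e(G). -/
open Finset
open scoped Classical

theorem stmt11 {V : Type*} [Fintype V] (G : SimpleGraph V) (A : Finset V)
    (x y : V) (hx : x ∈ A) (hy : y ∉ A) (hxy : G.Adj x y) :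
    (numEdges (G.deleteEdges {s(x, y)}) : ℝ) ^ 2 * bipScore (G.deleteEdges {s(x, y)}) A
      = (numEdges G : ℝ) ^ 2 * bipScore G A
        - (numEdges G : ℝ) * (((edgesIn G A : ℝ) + (edgesIn G Aᶜ : ℝ)) / (numEdges G : ℝ))
        + (numEdges G : ℝ) - 1 / 2 := by
  classical
  set G' := G.deleteEdges {s(x, y)} with hG'
  have hxyne : x ≠ y := hxy.ne
  have hmem : s(x, y) ∈ G.edgeFinset := by simpa using hxy
  have hedge : @SimpleGraph.edgeFinset V G' (@SimpleGraph.fintypeEdgeSet V G' _ fun a b =>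
      Classical.propDecidable _) = G.edgeFinset.erase s(x, y) := by
    ext e
    simp only [SimpleGraph.mem_edgeFinset, hG', SimpleGraph.edgeSet_deleteEdges,
      Set.mem_diff, Set.mem_singleton_iff, Finset.mem_erase]
    tauto
  have hm' : numEdges G' = numEdges G - 1 := by
    rw [numEdges, numEdges, hedge, Finset.card_erase_of_mem hmem]
  have hm1 : 1 ≤ numEdges G := Finset.card_pos.2 ⟨_, hmem⟩
  have hinA : edgesIn G' A = edgesIn G A := by
    rw [edgesIn, edgesIn, hedge, Finset.filter_erase,
      Finset.erase_eq_of_notMem]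
    simp only [Finset.mem_filter, not_and]
    intro _ h
    exact hy (h y (Sym2.mem_mk_right x y))
  have hinB : edgesIn G' Aᶜ = edgesIn G Aᶜ := by
    rw [edgesIn, edgesIn, hedge, Finset.filter_erase,
      Finset.erase_eq_of_notMem]
    simp only [Finset.mem_filter, not_and]
    intro _ h
    exact absurd (h x (Sym2.mem_mk_left x y)) (by simpa using hx)
  have hnbrx : G'.neighborFinset x = (G.neighborFinset x).erase y := by
    ext u
    simp only [SimpleGraph.mem_neighborFinset, hG', SimpleGraph.deleteEdges_adj,
      Set.mem_singleton_iff, Sym2.congr_right, Finset.mem_erase,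
      SimpleGraph.mem_neighborFinset]
    tauto
  have hnbry : G'.neighborFinset y = (G.neighborFinset y).erase x := by
    ext u
    have : s(y, u) = s(x, y) ↔ u = x := by
      rw [Sym2.eq_swap (a := x) (b := y), Sym2.congr_right]
    simp only [SimpleGraph.mem_neighborFinset, hG', SimpleGraph.deleteEdges_adj,
      Set.mem_singleton_iff, this, Finset.mem_erase, SimpleGraph.mem_neighborFinset]
    tauto
  have hnbro : ∀ v, v ≠ x → v ≠ y → G'.neighborFinset v = G.neighborFinset v := by
    intro v hvx hvy
    ext u
    simp only [SimpleGraph.mem_neighborFinset, hG', SimpleGraph.deleteEdges_adj,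
      Set.mem_singleton_iff]
    constructor
    · exact fun h => h.1
    · intro h
      refine ⟨h, fun hc => ?_⟩
      rcases Sym2.eq_iff.1 hc with ⟨h1, _⟩ | ⟨h1, _⟩
      · exact hvx h1
      · exact hvy h1
  have hdegx : G'.degree x + 1 = G.degree x := by
    rw [SimpleGraph.degree, SimpleGraph.degree, hnbrx,
      Finset.card_erase_add_one (by simpa using hxy)]
  have hdegy : G'.degree y + 1 = G.degree y := by
    rw [SimpleGraph.degree, SimpleGraph.degree, hnbry,
      Finset.card_erase_add_one (by simpa using hxy.symm)]
  have hvolA : vol G' A + 1 = vol G A := by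
    rw [vol, vol, ← Finset.add_sum_erase _ _ hx, ← Finset.add_sum_erase _ _ hx,
      ← hdegx]
    have : ∑ v ∈ A.erase x, G'.degree v = ∑ v ∈ A.erase x, G.degree v := by
      refine Finset.sum_congr rfl fun v hv => ?_
      have hvx : v ≠ x := (Finset.mem_erase.1 hv).1
      have hvy : v ≠ y := fun h => hy (h ▸ (Finset.mem_erase.1 hv).2)
      rw [SimpleGraph.degree, SimpleGraph.degree, hnbro v hvx hvy]
    rw [add_right_comm]; congr 1; · congr; funext a; exact Subsingleton.elim _ _
    · convert this
  have hyc : y ∈ Aᶜ := Finset.mem_compl.2 hy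
  have hvolB : vol G' Aᶜ + 1 = vol G Aᶜ := by
    rw [vol, vol, ← Finset.add_sum_erase _ _ hyc, ← Finset.add_sum_erase _ _ hyc,
      ← hdegy]
    have : ∑ v ∈ Aᶜ.erase y, G'.degree v = ∑ v ∈ Aᶜ.erase y, G.degree v := by
      refine Finset.sum_congr rfl fun v hv => ?_
      have hvy : v ≠ y := (Finset.mem_erase.1 hv).1
      have hvx : v ≠ x := fun h => by
        have := (Finset.mem_erase.1 hv).2
        rw [h, Finset.mem_compl] at this
        exact this hx
      rw [SimpleGraph.degree, SimpleGraph.degree, hnbro v hvx hvy]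
    rw [add_right_comm]; congr 1; · congr; funext a; exact Subsingleton.elim _ _
    · convert this
  have hhs : vol G A + vol G Aᶜ = 2 * numEdges G := by
    rw [vol, vol, Finset.sum_add_sum_compl]
    exact G.sum_degrees_eq_twice_card_edges
  rcases eq_or_lt_of_le hm1 with h1 | h2
  · -- numEdges G = 1
    have h1 : numEdges G = 1 := h1.symm
    have hE : G.edgeFinset = {s(x, y)} := by
      rcases Finset.card_eq_one.1 h1 with ⟨a, ha⟩
      rw [ha] at hmem ⊢
      simp only [Finset.mem_singleton] at hmem
      rw [hmem]
    have heA : edgesIn G A = 0 := by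
      rw [edgesIn, hE, Finset.card_eq_zero]
      ext e
      simp only [Finset.mem_filter, Finset.mem_singleton, Finset.notMem_empty, iff_false,
        not_and]
      rintro rfl h
      exact hy (h y (Sym2.mem_mk_right x y))
    have heB : edgesIn G Aᶜ = 0 := by
      rw [edgesIn, hE, Finset.card_eq_zero]
      ext e
      simp only [Finset.mem_filter, Finset.mem_singleton, Finset.notMem_empty, iff_false,
        not_and]
      rintro rfl h
      exact absurd (h x (Sym2.mem_mk_left x y)) (by simpa using hx)
    have hdx : 1 ≤ G.degree x := by
      rw [← SimpleGraph.card_neighborFinset_eq_degree]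
      exact Finset.card_pos.2 ⟨y, by simpa using hxy⟩
    have hdy : 1 ≤ G.degree y := by
      rw [← SimpleGraph.card_neighborFinset_eq_degree]
      exact Finset.card_pos.2 ⟨x, by simpa using hxy.symm⟩
    have haA : 1 ≤ vol G A := le_trans hdx (Finset.single_le_sum (f := fun v => G.degree v) (fun _ _ => Nat.zero_le _) hx)
    have haB : 1 ≤ vol G Aᶜ := le_trans hdy (Finset.single_le_sum (f := fun v => G.degree v) (fun _ _ => Nat.zero_le _) hyc)
    have hvA : vol G A = 1 := by omega
    have hvB : vol G Aᶜ = 1 := by omega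
    have hm0 : numEdges G' = 0 := by omega
    rw [bipScore, bipScore, hm0, h1, heA, heB, hinA, hinB, heA, heB, hvA, hvB]
    norm_num
  · -- 2 ≤ numEdges G
    have hm2 : 2 ≤ numEdges G := h2
    have hmc : (numEdges G' : ℝ) = (numEdges G : ℝ) - 1 := by
      rw [hm']
      push_cast [Nat.cast_sub hm1]
      ring
    have hvAc : (vol G' A : ℝ) = (vol G A : ℝ) - 1 := by
      have := congrArg (Nat.cast (R := ℝ)) hvolA
      push_cast at this
      linarith
    have hvBc : (vol G' Aᶜ : ℝ) = (vol G Aᶜ : ℝ) - 1 := by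
      have := congrArg (Nat.cast (R := ℝ)) hvolB
      push_cast at this
      linarith
    have hhsc : (vol G A : ℝ) + (vol G Aᶜ : ℝ) = 2 * (numEdges G : ℝ) := by
      have := congrArg (Nat.cast (R := ℝ)) hhs
      push_cast at this
      linarith
    have hmne : (numEdges G : ℝ) ≠ 0 := by
      have : (2 : ℝ) ≤ (numEdges G : ℝ) := by exact_mod_cast hm2
      linarith
    have hm'ne : (numEdges G : ℝ) - 1 ≠ 0 := by
      have : (2 : ℝ) ≤ (numEdges G : ℝ) := by exact_mod_cast hm2
      linarith
    have hb : (vol G Aᶜ : ℝ) = 2 * (numEdges G : ℝ) - (vol G A : ℝ) := by linarith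
    rw [bipScore, bipScore, hmc, hinA, hinB, hvAc, hvBc, hb]
    field_simp
    ring
end

section
/- Let 2 ≤ s ≤ t with gcd(s,t) = 1. Choose integers a', b' with a't − b's = 1, 1 ≤ a' ≤ s−1, 1 ≤ b' ≤ t−1, and let A consist of a' vertices of S and b' vertices of T. Let G⁻ be K_{s,t} minus one edge between A and its complement. Then (st−1)²·q_{(A,V∖A)}(G⁻) ≥ 1/(st) + t/s + s/t − 1 > 0. -/
open Finset
open scoped Classical

lemma edgesIn_K (s t : ℕ) (U : Finset (Fin s ⊕ Fin t)) :
    edgesIn (completeBipartiteGraph (Fin s) (Fin t)) U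
      = (U.filter (fun v => v.isLeft)).card * (U.filter (fun v => v.isRight)).card := by
  classical
  rw [edgesIn, ← Finset.card_product]
  refine (Finset.card_bij (fun p _ => s(p.1, p.2)) ?_ ?_ ?_).symm
  · rintro ⟨u, v⟩ hp
    simp only [Finset.mem_product, Finset.mem_filter] at hp
    obtain ⟨⟨hu, hul⟩, hv, hvr⟩ := hp
    simp only [Finset.mem_filter, SimpleGraph.mem_edgeFinset, SimpleGraph.mem_edgeSet]
    refine ⟨Or.inl ⟨hul, hvr⟩, ?_⟩
    intro w hw
    rw [Sym2.mem_iff] at hw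
    rcases hw with rfl | rfl <;> assumption
  · rintro ⟨u, v⟩ hp ⟨u', v'⟩ hp' h
    simp only [Finset.mem_product, Finset.mem_filter] at hp hp'
    rw [Sym2.eq_iff] at h
    rcases h with ⟨rfl, rfl⟩ | ⟨rfl, rfl⟩
    · rfl
    · exfalso
      have h1 := hp.1.2
      have h2 := hp'.1.2
      have h3 := hp.2.2
      cases u <;> simp_all
  · intro e he
    simp only [Finset.mem_filter, SimpleGraph.mem_edgeFinset, SimpleGraph.mem_edgeSet] at he
    induction e with
    | _ u v =>
      obtain ⟨hadj, hmem⟩ := he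
      have hu : u ∈ U := hmem u (by simp)
      have hv : v ∈ U := hmem v (by simp)
      rcases hadj with ⟨h1, h2⟩ | ⟨h1, h2⟩
      · exact ⟨(u, v), by simp [Finset.mem_product, hu, hv, h1, h2]⟩
      · exact ⟨(v, u), by simp [Finset.mem_product, hu, hv, h1, h2], Sym2.eq_swap⟩

lemma card_left_univ (s t : ℕ) :
    ((univ : Finset (Fin s ⊕ Fin t)).filter (fun v => v.isLeft)).card = s := by
  have h : ((univ : Finset (Fin s ⊕ Fin t)).filter (fun v => v.isLeft))
      = (univ : Finset (Fin s)).map ⟨Sum.inl, Sum.inl_injective⟩ := by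
    ext v; cases v <;> simp
  rw [h, Finset.card_map, Finset.card_univ, Fintype.card_fin]

lemma card_right_univ (s t : ℕ) :
    ((univ : Finset (Fin s ⊕ Fin t)).filter (fun v => v.isRight)).card = t := by
  have h : ((univ : Finset (Fin s ⊕ Fin t)).filter (fun v => v.isRight))
      = (univ : Finset (Fin t)).map ⟨Sum.inr, Sum.inr_injective⟩ := by
    ext v; cases v <;> simp
  rw [h, Finset.card_map, Finset.card_univ, Fintype.card_fin]

lemma degree_K (s t : ℕ) (v : Fin s ⊕ Fin t) :
    (completeBipartiteGraph (Fin s) (Fin t)).degree v = if v.isLeft then t else s := by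
  classical
  rw [← SimpleGraph.card_neighborFinset_eq_degree]
  cases v with
  | inl i =>
    have h : (completeBipartiteGraph (Fin s) (Fin t)).neighborFinset (Sum.inl i)
        = (univ : Finset (Fin s ⊕ Fin t)).filter (fun v => v.isRight) := by
      ext w; cases w <;> simp
    simp [h, card_right_univ]
  | inr j =>
    have h : (completeBipartiteGraph (Fin s) (Fin t)).neighborFinset (Sum.inr j)
        = (univ : Finset (Fin s ⊕ Fin t)).filter (fun v => v.isLeft) := by
      ext w; cases w <;> simp
    simp [h, card_left_univ]

lemma vol_K (s t : ℕ) (U : Finset (Fin s ⊕ Fin t)) :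
    vol (completeBipartiteGraph (Fin s) (Fin t)) U
      = (U.filter (fun v => v.isLeft)).card * t + (U.filter (fun v => v.isRight)).card * s := by
  classical
  rw [vol, ← Finset.sum_filter_add_sum_filter_not U (fun v => (v.isLeft : Prop))]
  congr 1
  · rw [Finset.sum_const_nat]
    intro v hv
    rw [Finset.mem_filter] at hv
    rw [degree_K, if_pos hv.2]
  · have h : U.filter (fun v => ¬ (v.isLeft = true)) = U.filter (fun v => v.isRight) := by
      ext v; cases v <;> simp
    rw [h, Finset.sum_const_nat]
    intro v hv
    rw [Finset.mem_filter] at hv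
    rw [degree_K, if_neg]
    cases v <;> simp_all

lemma vol_deleteEdge {V : Type*} [Fintype V] [DecidableEq V] (G : SimpleGraph V)
    {x y : V} (hxy : G.Adj x y) (U : Finset V) (hx : x ∈ U) (hy : y ∉ U) :
    vol (G.deleteEdges {s(x, y)}) U + 1 = vol G U := by
  classical
  have hdegx : (G.deleteEdges {s(x, y)}).degree x + 1 = G.degree x := by
    rw [← SimpleGraph.card_neighborFinset_eq_degree, ← SimpleGraph.card_neighborFinset_eq_degree]
    have h : (G.deleteEdges {s(x, y)}).neighborFinset x = (G.neighborFinset x).erase y := by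
      ext w
      simp only [SimpleGraph.mem_neighborFinset, SimpleGraph.deleteEdges_adj, Finset.mem_erase,
        Set.mem_singleton_iff]
      constructor
      · rintro ⟨h1, h2⟩
        exact ⟨fun hw => h2 (by rw [hw]), h1⟩
      · rintro ⟨h1, h2⟩
        refine ⟨h2, fun hc => h1 ?_⟩
        rw [Sym2.congr_right] at hc
        exact hc
    rw [h, Finset.card_erase_add_one (by simpa using hxy)]
  have hdeg : ∀ v ∈ U.erase x, (G.deleteEdges {s(x, y)}).degree v = G.degree v := by
    intro v hv
    rw [Finset.mem_erase] at hv
    have hvy : v ≠ y := fun h => hy (h ▸ hv.2)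
    rw [← SimpleGraph.card_neighborFinset_eq_degree, ← SimpleGraph.card_neighborFinset_eq_degree]
    congr 1
    ext w
    simp only [SimpleGraph.mem_neighborFinset, SimpleGraph.deleteEdges_adj,
      Set.mem_singleton_iff]
    constructor
    · exact fun h => h.1
    · intro h
      refine ⟨h, fun hc => ?_⟩
      rw [Sym2.eq_iff] at hc
      rcases hc with ⟨rfl, rfl⟩ | ⟨rfl, rfl⟩
      · exact hv.1 rfl
      · exact hvy rfl
  rw [vol, vol, ← Finset.add_sum_erase _ _ hx, ← Finset.add_sum_erase _ _ hx]
  rw [add_right_comm]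
  convert congrArg₂ HAdd.hAdd hdegx (Finset.sum_congr rfl hdeg)



lemma edgeFinset_deleteEdge' {V : Type*} [Fintype V] (G : SimpleGraph V)
    {x y : V} :
    (G.deleteEdges {s(x, y)}).edgeFinset = G.edgeFinset.erase s(x, y) := by
  classical
  ext e
  simp only [SimpleGraph.mem_edgeFinset, SimpleGraph.edgeSet_deleteEdges, Set.mem_diff,
    Set.mem_singleton_iff, Finset.mem_erase]
  tauto

lemma numEdges_deleteEdge {V : Type*} [Fintype V] (G : SimpleGraph V)
    {x y : V} (hxy : G.Adj x y) :
    numEdges (G.deleteEdges {s(x, y)}) + 1 = numEdges G := by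
  classical
  rw [numEdges, numEdges]
  convert Finset.card_erase_add_one (by simpa using hxy : s(x, y) ∈ G.edgeFinset) using 3
  convert edgeFinset_deleteEdge' G

lemma edgesIn_deleteEdge {V : Type*} [Fintype V] (G : SimpleGraph V)
    {x y : V} (U : Finset V) (hne : x ∉ U ∨ y ∉ U) :
    edgesIn (G.deleteEdges {s(x, y)}) U = edgesIn G U := by
  classical
  rw [edgesIn, edgesIn]
  convert_to (Finset.filter (fun e => ∀ v ∈ e, v ∈ U) (G.edgeFinset.erase s(x, y))).card = _ using 3
  · convert edgeFinset_deleteEdge' G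
  congr 1
  ext e
  simp only [Finset.mem_filter, Finset.mem_erase]
  constructor
  · rintro ⟨⟨_, h1⟩, h2⟩
    exact ⟨h1, h2⟩
  · rintro ⟨h1, h2⟩
    refine ⟨⟨fun hc => ?_, h1⟩, h2⟩
    subst hc
    rcases hne with h | h
    · exact h (h2 x (by simp))
    · exact h (h2 y (by simp))

lemma numEdges_K (s t : ℕ) :
    numEdges (completeBipartiteGraph (Fin s) (Fin t)) = s * t := by
  classical
  have h : numEdges (completeBipartiteGraph (Fin s) (Fin t))
      = edgesIn (completeBipartiteGraph (Fin s) (Fin t)) univ := by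
    rw [numEdges, edgesIn]
    congr 1
    ext e
    simp
  rw [h, edgesIn_K, card_left_univ, card_right_univ]

lemma card_compl_filter_left (s t a : ℕ) (A : Finset (Fin s ⊕ Fin t))
    (hAS : (A.filter (fun v => v.isLeft)).card = a) :
    (Aᶜ.filter (fun v => v.isLeft)).card = s - a := by
  classical
  have h : Aᶜ.filter (fun v => v.isLeft)
      = ((univ : Finset (Fin s ⊕ Fin t)).filter (fun v => v.isLeft)) \
        (A.filter (fun v => v.isLeft)) := by
    ext v
    simp only [Finset.mem_filter, Finset.mem_compl, Finset.mem_sdiff, Finset.mem_univ,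
      true_and]
    tauto
  rw [h, Finset.card_sdiff_of_subset (Finset.filter_subset_filter _ (Finset.subset_univ A)),
    card_left_univ, hAS]

lemma card_compl_filter_right (s t b : ℕ) (A : Finset (Fin s ⊕ Fin t))
    (hAT : (A.filter (fun v => v.isRight)).card = b) :
    (Aᶜ.filter (fun v => v.isRight)).card = t - b := by
  classical
  have h : Aᶜ.filter (fun v => v.isRight)
      = ((univ : Finset (Fin s ⊕ Fin t)).filter (fun v => v.isRight)) \
        (A.filter (fun v => v.isRight)) := by
    ext v
    simp only [Finset.mem_filter, Finset.mem_compl, Finset.mem_sdiff, Finset.mem_univ,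
      true_and]
    tauto
  rw [h, Finset.card_sdiff_of_subset (Finset.filter_subset_filter _ (Finset.subset_univ A)),
    card_right_univ, hAT]

set_option maxHeartbeats 1600000 in
theorem stmt12 (s t a b : ℕ) (hs : 2 ≤ s) (hst : s ≤ t) (hcop : Nat.gcd s t = 1)
    (hab : (a : ℤ) * t - (b : ℤ) * s = 1)
    (ha : 1 ≤ a) (ha' : a ≤ s - 1) (hb : 1 ≤ b) (hb' : b ≤ t - 1)
    (A : Finset (Fin s ⊕ Fin t))
    (hAS : (A.filter (fun v => v.isLeft)).card = a)
    (hAT : (A.filter (fun v => v.isRight)).card = b)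
    (x y : Fin s ⊕ Fin t) (hx : x ∈ A) (hy : y ∉ A)
    (hxy : (completeBipartiteGraph (Fin s) (Fin t)).Adj x y) :
    ((1 : ℝ) / (s * t) + (t : ℝ) / s + (s : ℝ) / t - 1
      ≤ ((s * t : ℝ) - 1) ^ 2 *
        bipScore ((completeBipartiteGraph (Fin s) (Fin t)).deleteEdges {s(x, y)}) A) ∧
      (0 : ℝ) < (1 : ℝ) / (s * t) + (t : ℝ) / s + (s : ℝ) / t - 1 := by
  classical
  set K := completeBipartiteGraph (Fin s) (Fin t) with hK
  set G := K.deleteEdges {s(x, y)} with hG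
  -- basic numeric facts
  have hslt : s < t := by
    rcases Nat.lt_or_ge s t with h | h
    · exact h
    · have : s = t := le_antisymm hst h
      rw [this, Nat.gcd_self] at hcop
      omega
  have has : a < s := by omega
  have hbt : b < t := by omega
  -- combinatorial counts
  have hyc : y ∈ Aᶜ := Finset.mem_compl.2 hy
  have hxc : x ∉ Aᶜ := fun h => (Finset.mem_compl.1 h) hx
  have hE1 : edgesIn G A = a * b := by
    rw [hG, edgesIn_deleteEdge _ _ (Or.inr hy), edgesIn_K, hAS, hAT]
  have hE2 : edgesIn G Aᶜ = (s - a) * (t - b) := by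
    rw [hG, edgesIn_deleteEdge _ _ (Or.inl hxc), edgesIn_K,
      card_compl_filter_left s t a A hAS, card_compl_filter_right s t b A hAT]
  have hV1 : vol G A + 1 = a * t + b * s := by
    rw [hG, vol_deleteEdge K hxy A hx hy, vol_K, hAS, hAT]
  have hV2 : vol G Aᶜ + 1 = (s - a) * t + (t - b) * s := by
    have hswap : ({s(x, y)} : Set (Sym2 (Fin s ⊕ Fin t))) = {s(y, x)} := by
      rw [Sym2.eq_swap]
    rw [hG, hswap, vol_deleteEdge K hxy.symm Aᶜ hyc hxc, vol_K,
      card_compl_filter_left s t a A hAS, card_compl_filter_right s t b A hAT]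
  have hN : numEdges G + 1 = s * t := by
    rw [hG, numEdges_deleteEdge K hxy, numEdges_K]
  -- real versions
  have hs0 : (0 : ℝ) < s := by exact_mod_cast Nat.pos_of_ne_zero (by omega)
  have ht0 : (0 : ℝ) < t := by exact_mod_cast Nat.pos_of_ne_zero (by omega)
  have hst0 : (0 : ℝ) < (s : ℝ) * t := by positivity
  have habR : (a : ℝ) * t - (b : ℝ) * s = 1 := by exact_mod_cast hab
  have haR : (1 : ℝ) ≤ a := by exact_mod_cast ha
  have hbR : (1 : ℝ) ≤ b := by exact_mod_cast hb
  have hs2 : (2 : ℝ) ≤ s := by exact_mod_cast hs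
  have hsaR : (1 : ℝ) ≤ (s : ℝ) - a := by
    have h : (a : ℝ) + 1 ≤ s := by exact_mod_cast (show a + 1 ≤ s by omega)
    linarith
  have htsR : (s : ℝ) + 1 ≤ t := by exact_mod_cast (show s + 1 ≤ t by omega)
  have hNR : (numEdges G : ℝ) = (s : ℝ) * t - 1 := by
    have h := congrArg (Nat.cast : ℕ → ℝ) hN
    push_cast at h
    linarith
  have hE1R : (edgesIn G A : ℝ) = (a : ℝ) * b := by
    rw [hE1]; push_cast; ring
  have hE2R : (edgesIn G Aᶜ : ℝ) = ((s : ℝ) - a) * ((t : ℝ) - b) := by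
    rw [hE2, Nat.cast_mul, Nat.cast_sub has.le, Nat.cast_sub hbt.le]
  have hV1R : (vol G A : ℝ) = 2 * ((b : ℝ) * s) := by
    have h := congrArg (Nat.cast : ℕ → ℝ) hV1
    push_cast at h
    linear_combination h + habR
  have hV2R : (vol G Aᶜ : ℝ) = 2 * (((s : ℝ) - a) * t) := by
    have h := congrArg (Nat.cast : ℕ → ℝ) hV2
    rw [Nat.cast_add, Nat.cast_add, Nat.cast_mul, Nat.cast_mul, Nat.cast_sub has.le,
      Nat.cast_sub hbt.le] at h
    push_cast at h
    linear_combination h + habR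
  have hgt1 : (1 : ℝ) < (s : ℝ) * t := by nlinarith
  have hden : ((s : ℝ) * t - 1) ≠ 0 := ne_of_gt (by linarith)
  have hcompl_eq : ∀ B : Finset (Fin s ⊕ Fin t),
      @compl _ (@BooleanAlgebra.toCompl _
        (@Finset.booleanAlgebra _ _ (fun a b => Classical.propDecidable (a = b)))) B = Bᶜ := by
    intro B
    ext v
    simp
  have hkey : ((s : ℝ) * (t : ℝ) - 1) ^ 2 * bipScore G A = 2 * b * ((s : ℝ) - a) := by
    rw [bipScore, hcompl_eq, hNR, hE1R, hE2R, hV1R, hV2R]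
    have hrw : ∀ P Q : ℝ, ((s : ℝ) * t - 1) ^ 2 * (P / ((s : ℝ) * t - 1)
        - Q / (4 * ((s : ℝ) * t - 1) ^ 2)) = P * ((s : ℝ) * t - 1) - Q / 4 := by
      intro P Q
      field_simp
    rw [hrw]
    linear_combination ((s : ℝ) * t - (a : ℝ) * t + (b : ℝ) * s) * habR
  clear hE1 hE2 hV1 hV2 hN hNR hE1R hE2R hV1R hV2R hxy hx hy hyc hxc hAS hAT hcompl_eq
  constructor
  · rw [hkey]
    clear hkey
    clear_value K G
    clear hG hK G K A x y hab hcop ha' hb' ha hb hs hst hslt has hbt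
    have hsum : (1 : ℝ) / ((s : ℝ) * t) + (t : ℝ) / s + (s : ℝ) / t - 1
        = (1 + (t : ℝ) ^ 2 + (s : ℝ) ^ 2 - (s : ℝ) * t) / ((s : ℝ) * t) := by
      field_simp
    rw [hsum, div_le_iff₀ hst0]
    have hbs : (t : ℝ) - 1 ≤ (b : ℝ) * s := by nlinarith [mul_nonneg (sub_nonneg.2 haR) ht0.le]
    have h1t : (t : ℝ) ≤ ((s : ℝ) - a) * t := by nlinarith [mul_nonneg (sub_nonneg.2 hsaR) ht0.le]
    have hprod : ((t : ℝ) - 1) * t ≤ ((b : ℝ) * s) * (((s : ℝ) - a) * t) := by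
      apply mul_le_mul hbs h1t (le_of_lt ht0)
      nlinarith
    nlinarith [hprod,
      mul_nonneg (by linarith : (0 : ℝ) ≤ (t : ℝ) - (s : ℝ) - 1)
        (by linarith : (0 : ℝ) ≤ (t : ℝ) + (s : ℝ)),
      mul_nonneg (by linarith : (0 : ℝ) ≤ (s : ℝ) - 1)
        (by linarith : (0 : ℝ) ≤ (t : ℝ) + 1)]
  · have h1 : (1 : ℝ) ≤ (t : ℝ) / s := by
      rw [le_div_iff₀ hs0]
      have h : (s : ℝ) ≤ t := by exact_mod_cast hst
      linarith
    have h2 : (0 : ℝ) < 1 / ((s : ℝ) * t) := by positivity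
    have h3 : (0 : ℝ) < (s : ℝ) / t := by positivity
    linarith
end
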